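/- arXiv:2506.07791 — 12 statements merged into one kernel-verified Lean document; each statement's English description precedes it below -/
import Mathlib

section
/- Let κ > 0 and let u : ℝ×ℝ → ℝ be infinitely differentiable in (t,x) with m = u − u_xx satisfying m(t,x) > 0 for all (t,x) and the mCH equation m_t + ((u² − u_x²)·m)_x = 0 everywhere. Define the density ρ(t,x) = m_xx²/(2m⁷) + 5·m_x²/(4m⁷) − 7·m_x⁴/(2m⁹) + 1/(16m⁵) − 1/(16κ⁵). Assume that for every t: the functions x ↦ m(t,x) − κ and x ↦ u(t,x) − κ are Schwartz functions of x, and inf_x m(t,x) > 0; and assume that the function E₄ : t ↦ ∫_ℝ ρ(t,x) dx is differentiable with derivative ∫_ℝ ∂_t ρ(t,x) dx. Then E₄ is constant, i.e. dE₄/dt = 0 for all t. -/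
open MeasureTheory Filter
open scoped ContDiff

/-- partial derivative in the `x` (second) direction -/
noncomputable def pdx (f : ℝ × ℝ → ℝ) : ℝ × ℝ → ℝ := fun p => fderiv ℝ f p (0, 1)

/-- partial derivative in the `t` (first) direction -/
noncomputable def pdt (f : ℝ × ℝ → ℝ) : ℝ × ℝ → ℝ := fun p => fderiv ℝ f p (1, 0)

theorem pd_swap {f : ℝ × ℝ → ℝ} (hf : ContDiff ℝ ∞ f) (p v w : ℝ × ℝ) :
    fderiv ℝ (fun q => fderiv ℝ f q w) p v = fderiv ℝ (fun q => fderiv ℝ f q v) p w := by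
  have hd : DifferentiableAt ℝ (fderiv ℝ f) p :=
    ((hf.fderiv_right (m := ∞) (by norm_num)).differentiable (by decide)) p
  rw [fderiv_clm_apply hd (differentiableAt_const w),
      fderiv_clm_apply hd (differentiableAt_const v)]
  simp only [fderiv_fun_const, Pi.zero_apply, ContinuousLinearMap.comp_zero, zero_add,
    ContinuousLinearMap.add_apply, ContinuousLinearMap.flip_apply]
  exact (hf.contDiffAt.isSymmSndFDerivAt (by simp; decide)) v w

theorem pdx_contDiff {f : ℝ × ℝ → ℝ} (hf : ContDiff ℝ ∞ f) : ContDiff ℝ ∞ (pdx f) :=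
  (hf.fderiv_right (m := ∞) (by norm_num)).clm_apply contDiff_const

theorem pdt_contDiff {f : ℝ × ℝ → ℝ} (hf : ContDiff ℝ ∞ f) : ContDiff ℝ ∞ (pdt f) :=
  (hf.fderiv_right (m := ∞) (by norm_num)).clm_apply contDiff_const

theorem sliceX {f : ℝ × ℝ → ℝ} (hf : ContDiff ℝ ∞ f) (t x : ℝ) :
    HasDerivAt (fun y => f (t, y)) (pdx f (t, x)) x := by
  have h1 : HasFDerivAt f (fderiv ℝ f (t, x)) (t, x) :=
    (hf.differentiable (by decide) (t, x)).hasFDerivAt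
  have h2 : HasDerivAt (fun y : ℝ => ((t, y) : ℝ × ℝ)) (((0 : ℝ), (1 : ℝ)) : ℝ × ℝ) x :=
    (hasDerivAt_const x t).prodMk (hasDerivAt_id x)
  exact h1.comp_hasDerivAt x h2

theorem sliceT {f : ℝ × ℝ → ℝ} (hf : ContDiff ℝ ∞ f) (t x : ℝ) :
    HasDerivAt (fun s => f (s, x)) (pdt f (t, x)) t := by
  have h1 : HasFDerivAt f (fderiv ℝ f (t, x)) (t, x) :=
    (hf.differentiable (by decide) (t, x)).hasFDerivAt
  have h2 : HasDerivAt (fun s : ℝ => ((s, x) : ℝ × ℝ)) (((1 : ℝ), (0 : ℝ)) : ℝ × ℝ) t :=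
    (hasDerivAt_id t).prodMk (hasDerivAt_const t x)
  exact h1.comp_hasDerivAt t h2

theorem sliceX_deriv {f : ℝ × ℝ → ℝ} (hf : ContDiff ℝ ∞ f) (t x : ℝ) :
    deriv (fun y => f (t, y)) x = pdx f (t, x) := (sliceX hf t x).deriv

theorem sliceT_deriv {f : ℝ × ℝ → ℝ} (hf : ContDiff ℝ ∞ f) (t x : ℝ) :
    deriv (fun s => f (s, x)) t = pdt f (t, x) := (sliceT hf t x).deriv

theorem pdtx_swap {f : ℝ × ℝ → ℝ} (hf : ContDiff ℝ ∞ f) (p : ℝ × ℝ) :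
    pdt (pdx f) p = pdx (pdt f) p := pd_swap hf p (1, 0) (0, 1)

theorem pdx_neg (g : ℝ × ℝ → ℝ) (p : ℝ × ℝ) :
    pdx (fun q => -(g q)) p = -(pdx g p) := by
  simp [pdx, fderiv_neg]

theorem schwartz_tendsto_top (g : SchwartzMap ℝ ℝ) : Tendsto g atTop (nhds 0) :=
  (zero_at_infty g).mono_left (by rw [cocompact_eq_atBot_atTop]; exact le_sup_right)

theorem schwartz_tendsto_bot (g : SchwartzMap ℝ ℝ) : Tendsto g atBot (nhds 0) :=
  (zero_at_infty g).mono_left (by rw [cocompact_eq_atBot_atTop]; exact le_sup_left)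
open scoped ContDiff

def P1e (p q a b : ℝ) : ℝ := 2*q*a^2 + (p^2 - q^2)*b
def P2e (p q a b c : ℝ) : ℝ := 2*(p - a)*a^2 + 6*q*a*b + (p^2 - q^2)*c
def P3e (p q a b c d : ℝ) : ℝ :=
  -(12*a^2*b) + 6*q*b^2 + 8*q*a*c + 2*q*a^2 - q^2*d + 10*p*a*b + p^2*d

def fluxN (p q a b c : ℝ) : ℝ :=
  96*a^4*b^2 - 16*a^6 - 32*q*a^2*b^3 - 32*q*a^4*b - 56*q^2*b^4 + 8*q^2*a^2*c^2
    + 20*q^2*a^2*b^2 + q^2*a^4 - 80*p*a^3*b^2 + 12*p*a^5 + 56*p^2*b^4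
    - 8*p^2*a^2*c^2 - 20*p^2*a^2*b^2 - p^2*a^4

noncomputable def tder (a b c A B C : ℝ) : ℝ :=
  ((16*c*C*a^2 + 16*c^2*a*A + 40*b*B*a^2 + 40*b^2*a*A - 224*b^3*B + 4*a^3*A) * (16*a^9)
    - (8*c^2*a^2 + 20*b^2*a^2 - 56*b^4 + a^4) * (16*(9*a^8*A))) / (16*a^9)^2

section OneD
variable {U M : ℝ → ℝ}

theorem hasD_U (hU : ContDiff ℝ ∞ U) (y : ℝ) : HasDerivAt U (deriv U y) y :=
  ((hU.differentiable (by decide)) y).hasDerivAt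

theorem hasD_U' (hU : ContDiff ℝ ∞ U) (hrel : ∀ y, deriv (deriv U) y = U y - M y) (y : ℝ) :
    HasDerivAt (deriv U) (U y - M y) y := by
  have h2 : ContDiff ℝ ∞ (deriv U) := (contDiff_infty_iff_deriv.mp hU).2
  have := ((h2.differentiable (by decide)) y).hasDerivAt
  rwa [hrel y] at this

theorem hasD_M (hM : ContDiff ℝ ∞ M) (y : ℝ) : HasDerivAt M (deriv M y) y :=
  ((hM.differentiable (by decide)) y).hasDerivAt

theorem hasD_M' (hM : ContDiff ℝ ∞ M) (y : ℝ) :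
    HasDerivAt (deriv M) (deriv (deriv M) y) y :=
  (((contDiff_infty_iff_deriv.mp hM).2.differentiable (by decide)) y).hasDerivAt

theorem hasD_M'' (hM : ContDiff ℝ ∞ M) (y : ℝ) :
    HasDerivAt (deriv (deriv M)) (deriv (deriv (deriv M)) y) y :=
  (((contDiff_infty_iff_deriv.mp (contDiff_infty_iff_deriv.mp hM).2).2.differentiable
    (by decide)) y).hasDerivAt

theorem W1 (hU : ContDiff ℝ ∞ U) (hM : ContDiff ℝ ∞ M)
    (hrel : ∀ y, deriv (deriv U) y = U y - M y) :
    deriv (fun z => (U z ^ 2 - deriv U z ^ 2) * M z)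
      = fun y => P1e (U y) (deriv U y) (M y) (deriv M y) := by
  funext y
  have h := (((hasD_U hU y).pow 2).sub ((hasD_U' hU hrel y).pow 2)).mul (hasD_M hM y)
  refine h.deriv.trans ?_; simp only [P1e]; simp only [Pi.pow_apply, Pi.mul_apply, Pi.div_apply, Pi.sub_apply, Pi.add_apply, Nat.cast_ofNat, Nat.reduceSub]; ring

theorem W2 (hU : ContDiff ℝ ∞ U) (hM : ContDiff ℝ ∞ M)
    (hrel : ∀ y, deriv (deriv U) y = U y - M y) :
    deriv (deriv (fun z => (U z ^ 2 - deriv U z ^ 2) * M z))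
      = fun y => P2e (U y) (deriv U y) (M y) (deriv M y) (deriv (deriv M) y) := by
  rw [W1 hU hM hrel]
  funext y
  simp only [P1e, P2e]
  have h := (((hasD_U' hU hrel y).const_mul (2:ℝ)).mul ((hasD_M hM y).pow 2)).add
    ((((hasD_U hU y).pow 2).sub ((hasD_U' hU hrel y).pow 2)).mul (hasD_M' hM y))
  refine h.deriv.trans ?_; simp only [Pi.pow_apply, Pi.mul_apply, Pi.div_apply, Pi.sub_apply, Pi.add_apply, Nat.cast_ofNat, Nat.reduceSub]; ring

theorem W3 (hU : ContDiff ℝ ∞ U) (hM : ContDiff ℝ ∞ M)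
    (hrel : ∀ y, deriv (deriv U) y = U y - M y) :
    deriv (deriv (deriv (fun z => (U z ^ 2 - deriv U z ^ 2) * M z)))
      = fun y => P3e (U y) (deriv U y) (M y) (deriv M y) (deriv (deriv M) y)
          (deriv (deriv (deriv M)) y) := by
  rw [W2 hU hM hrel]
  funext y
  simp only [P2e, P3e]
  have h := (((((hasD_U hU y).sub (hasD_M hM y)).const_mul (2:ℝ)).mul
      ((hasD_M hM y).pow 2)).add
    ((((hasD_U' hU hrel y).const_mul (6:ℝ)).mul (hasD_M hM y)).mul (hasD_M' hM y))).add
    ((((hasD_U hU y).pow 2).sub ((hasD_U' hU hrel y).pow 2)).mul (hasD_M'' hM y))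
  refine h.deriv.trans ?_; simp only [Pi.pow_apply, Pi.mul_apply, Pi.div_apply, Pi.sub_apply, Pi.add_apply, Nat.cast_ofNat, Nat.reduceSub]; ring

theorem flux_hasDeriv (hU : ContDiff ℝ ∞ U) (hM : ContDiff ℝ ∞ M)
    (hrel : ∀ y, deriv (deriv U) y = U y - M y) (hpos : ∀ y, 0 < M y) (x : ℝ) :
    HasDerivAt (fun z => fluxN (U z) (deriv U z) (M z) (deriv M z) (deriv (deriv M) z)
        / (16 * M z ^ 9))
      (tder (M x) (deriv M x) (deriv (deriv M) x)
        (-(P1e (U x) (deriv U x) (M x) (deriv M x)))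
        (-(P2e (U x) (deriv U x) (M x) (deriv M x) (deriv (deriv M) x)))
        (-(P3e (U x) (deriv U x) (M x) (deriv M x) (deriv (deriv M) x)
            (deriv (deriv (deriv M)) x)))) x := by
  have hMne : M x ≠ 0 := ne_of_gt (hpos x)
  have G0 := hasD_U hU x
  have G1 := hasD_U' hU hrel x
  have H0 := hasD_M hM x
  have H1 := hasD_M' hM x
  have H2 := hasD_M'' hM x
  simp only [fluxN]
  have hN := ((((((((((((((H0.pow 4).const_mul (96:ℝ)).mul (H1.pow 2)).sub
    ((H0.pow 6).const_mul (16:ℝ))).sub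
    (((G1.const_mul (32:ℝ)).mul (H0.pow 2)).mul (H1.pow 3))).sub
    (((G1.const_mul (32:ℝ)).mul (H0.pow 4)).mul H1)).sub
    (((G1.pow 2).const_mul (56:ℝ)).mul (H1.pow 4))).add
    ((((G1.pow 2).const_mul (8:ℝ)).mul (H0.pow 2)).mul (H2.pow 2))).add
    ((((G1.pow 2).const_mul (20:ℝ)).mul (H0.pow 2)).mul (H1.pow 2))).add
    ((G1.pow 2).mul (H0.pow 4))).sub
    (((G0.const_mul (80:ℝ)).mul (H0.pow 3)).mul (H1.pow 2))).add
    ((G0.const_mul (12:ℝ)).mul (H0.pow 5))).add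
    (((G0.pow 2).const_mul (56:ℝ)).mul (H1.pow 4))).sub
    ((((G0.pow 2).const_mul (8:ℝ)).mul (H0.pow 2)).mul (H2.pow 2))).sub
    ((((G0.pow 2).const_mul (20:ℝ)).mul (H0.pow 2)).mul (H1.pow 2))
  have hN2 := hN.sub ((G0.pow 2).mul (H0.pow 4))
  have hden := (H0.pow 9).const_mul (16:ℝ)
  have hdne : 16 * M x ^ 9 ≠ 0 := by positivity
  have h := hN2.div hden hdne
  refine h.congr_deriv ?_
  simp only [tder, P1e, P2e, P3e]
  simp only [Pi.pow_apply, Pi.mul_apply, Pi.div_apply, Pi.sub_apply, Pi.add_apply, Nat.cast_ofNat, Nat.reduceSub]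
  field_simp
  ring

theorem flux_tendsto {U M : ℝ → ℝ} {l : Filter ℝ} {κ : ℝ} (hκ : 0 < κ)
    (h1 : Filter.Tendsto U l (nhds κ)) (h2 : Filter.Tendsto (deriv U) l (nhds 0))
    (h3 : Filter.Tendsto M l (nhds κ)) (h4 : Filter.Tendsto (deriv M) l (nhds 0))
    (h5 : Filter.Tendsto (deriv (deriv M)) l (nhds 0)) :
    Filter.Tendsto (fun z => fluxN (U z) (deriv U z) (M z) (deriv M z) (deriv (deriv M) z)
      / (16 * M z ^ 9)) l (nhds (fluxN κ 0 κ 0 0 / (16 * κ ^ 9))) := by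
  simp only [fluxN]
  have c8 : Filter.Tendsto (fun _ : ℝ => (8:ℝ)) l (nhds 8) := tendsto_const_nhds
  have c12 : Filter.Tendsto (fun _ : ℝ => (12:ℝ)) l (nhds 12) := tendsto_const_nhds
  have c16 : Filter.Tendsto (fun _ : ℝ => (16:ℝ)) l (nhds 16) := tendsto_const_nhds
  have c20 : Filter.Tendsto (fun _ : ℝ => (20:ℝ)) l (nhds 20) := tendsto_const_nhds
  have c32 : Filter.Tendsto (fun _ : ℝ => (32:ℝ)) l (nhds 32) := tendsto_const_nhds
  have c56 : Filter.Tendsto (fun _ : ℝ => (56:ℝ)) l (nhds 56) := tendsto_const_nhds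
  have c80 : Filter.Tendsto (fun _ : ℝ => (80:ℝ)) l (nhds 80) := tendsto_const_nhds
  have c96 : Filter.Tendsto (fun _ : ℝ => (96:ℝ)) l (nhds 96) := tendsto_const_nhds
  have hnum := (((((((((((((c96.mul (h3.pow 4)).mul (h4.pow 2)).sub
    (c16.mul (h3.pow 6))).sub
    (((c32.mul h2).mul (h3.pow 2)).mul (h4.pow 3))).sub
    (((c32.mul h2).mul (h3.pow 4)).mul h4)).sub
    ((c56.mul (h2.pow 2)).mul (h4.pow 4))).add
    (((c8.mul (h2.pow 2)).mul (h3.pow 2)).mul (h5.pow 2))).add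
    (((c20.mul (h2.pow 2)).mul (h3.pow 2)).mul (h4.pow 2))).add
    ((h2.pow 2).mul (h3.pow 4))).sub
    (((c80.mul h1).mul (h3.pow 3)).mul (h4.pow 2))).add
    ((c12.mul h1).mul (h3.pow 5))).add
    ((c56.mul (h1.pow 2)).mul (h4.pow 4))).sub
    (((c8.mul (h1.pow 2)).mul (h3.pow 2)).mul (h5.pow 2))).sub
    (((c20.mul (h1.pow 2)).mul (h3.pow 2)).mul (h4.pow 2))
  have hnum2 := hnum.sub ((h1.pow 2).mul (h3.pow 4))
  have hdenne : 16 * κ ^ 9 ≠ 0 := by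
    have := pow_pos hκ 9; positivity
  exact hnum2.div (c16.mul (h3.pow 9)) hdenne

set_option maxHeartbeats 1600000 in
open SchwartzMap in
/-- conservation of the functional `E₄` for the mCH equation on a
nonzero background `κ > 0`, under Schwartz-type decay assumptions and the
assumption that differentiation under the integral sign is valid. -/
theorem E4_conserved (κ : ℝ) (hκ : 0 < κ) (u m : ℝ → ℝ → ℝ)
    (hu : ContDiff ℝ (⊤ : ℕ∞) (Function.uncurry u))
    (hm : ∀ t x, m t x = u t x - deriv (deriv (u t)) x)
    (hpos : ∀ t x, 0 < m t x)
    (hmCH : ∀ t x,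
      deriv (fun s => m s x) t
        + deriv (fun y => ((u t y) ^ 2 - (deriv (u t) y) ^ 2) * m t y) x = 0)
    (ρ : ℝ → ℝ → ℝ)
    (hρ : ∀ t x, ρ t x =
      (deriv (deriv (m t)) x) ^ 2 / (2 * (m t x) ^ 7)
        + 5 * (deriv (m t) x) ^ 2 / (4 * (m t x) ^ 7)
        - 7 * (deriv (m t) x) ^ 4 / (2 * (m t x) ^ 9)
        + 1 / (16 * (m t x) ^ 5) - 1 / (16 * κ ^ 5))
    (hSm : ∀ t, ∃ f : SchwartzMap ℝ ℝ, ∀ x, f x = m t x - κ)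
    (hSu : ∀ t, ∃ f : SchwartzMap ℝ ℝ, ∀ x, f x = u t x - κ)
    (hinf : ∀ t, ∃ ε > 0, ∀ x, ε ≤ m t x)
    (hdiff : ∀ t, HasDerivAt (fun s => ∫ x, ρ s x)
      (∫ x, deriv (fun s => ρ s x) t) t) :
    ∀ t, deriv (fun s => ∫ x, ρ s x) t = 0 := by
  intro t
  rw [(hdiff t).deriv]
  set U2 : ℝ × ℝ → ℝ := Function.uncurry u with hU2def
  have hU2 : ContDiff ℝ ∞ U2 := hu.of_le (by simp)
  have hUx : ContDiff ℝ ∞ (pdx U2) := pdx_contDiff hU2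
  have hUxx : ContDiff ℝ ∞ (pdx (pdx U2)) := pdx_contDiff hUx
  have hus : ∀ s y, u s y = U2 (s, y) := fun _ _ => rfl
  have hus_fun : ∀ s, u s = fun y => U2 (s, y) := fun s => funext (fun y => hus s y)
  have hder_u : ∀ s y, deriv (u s) y = pdx U2 (s, y) := by
    intro s y; rw [hus_fun s]; exact sliceX_deriv hU2 s y
  have hder2_u : ∀ s y, deriv (deriv (u s)) y = pdx (pdx U2) (s, y) := by
    intro s y
    have h1 : deriv (u s) = fun y' => pdx U2 (s, y') := funext (hder_u s)
    rw [h1]; exact sliceX_deriv hUx s y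
  set M2 : ℝ × ℝ → ℝ := fun p => U2 p - pdx (pdx U2) p with hM2def
  have hM2c : ContDiff ℝ ∞ M2 := hU2.sub hUxx
  have hmeq : ∀ s y, m s y = M2 (s, y) := by
    intro s y
    rw [hm s y, hder2_u s y, hus s y, hM2def]
  have hm_fun : ∀ s, m s = fun y => M2 (s, y) := fun s => funext (hmeq s)
  have hder_m : ∀ s y, deriv (m s) y = pdx M2 (s, y) := by
    intro s y; rw [hm_fun s]; exact sliceX_deriv hM2c s y
  have hMx : ContDiff ℝ ∞ (pdx M2) := pdx_contDiff hM2c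
  have hder2_m : ∀ s y, deriv (deriv (m s)) y = pdx (pdx M2) (s, y) := by
    intro s y
    have h1 : deriv (m s) = fun y' => pdx M2 (s, y') := funext (hder_m s)
    rw [h1]; exact sliceX_deriv hMx s y
  set QM : ℝ × ℝ → ℝ := fun p => (U2 p ^ 2 - pdx U2 p ^ 2) * M2 p with hQMdef
  have hQMc : ContDiff ℝ ∞ QM := ((hU2.pow 2).sub (hUx.pow 2)).mul hM2c
  have hQeq : ∀ s, (fun y => (u s y ^ 2 - deriv (u s) y ^ 2) * m s y)
      = fun y => QM (s, y) := by
    intro s; funext y; rw [hder_u s y, hmeq s y, hus s y, hQMdef]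
  have hMteq : ∀ s y, pdt M2 (s, y) = -(pdx QM (s, y)) := by
    intro s y
    have h0 := hmCH s y
    have h1 : deriv (fun s' => m s' y) s = pdt M2 (s, y) := by
      have he : (fun s' => m s' y) = fun s' => M2 (s', y) := funext (fun s' => hmeq s' y)
      rw [he]; exact sliceT_deriv hM2c s y
    have h2 : deriv (fun y' => (u s y' ^ 2 - deriv (u s) y' ^ 2) * m s y') y
        = pdx QM (s, y) := by
      rw [hQeq s]; exact sliceX_deriv hQMc s y
    rw [h1, h2] at h0
    linarith
  have hMt_fun : pdt M2 = fun p => -(pdx QM p) := by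
    funext p; obtain ⟨s, y⟩ := p; exact hMteq s y
  -- 1D facts at time t
  have hu1D : ContDiff ℝ ∞ (u t) := by
    rw [hus_fun t]; exact hU2.comp (contDiff_const.prodMk contDiff_id)
  have hm1D : ContDiff ℝ ∞ (m t) := by
    rw [hm_fun t]; exact hM2c.comp (contDiff_const.prodMk contDiff_id)
  have hrel1D : ∀ y, deriv (deriv (u t)) y = u t y - m t y := by
    intro y; have := hm t y; linarith
  have hpos1D : ∀ y, 0 < m t y := hpos t
  have hP1 : ∀ y, pdx QM (t, y)
      = P1e (u t y) (deriv (u t) y) (m t y) (deriv (m t) y) := by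
    intro y
    rw [← sliceX_deriv hQMc t y, ← hQeq t, W1 hu1D hm1D hrel1D]
  have hP2 : ∀ y, pdx (pdx QM) (t, y)
      = P2e (u t y) (deriv (u t) y) (m t y) (deriv (m t) y) (deriv (deriv (m t)) y) := by
    intro y
    have hfun : (fun y' => pdx QM (t, y'))
        = deriv (fun z => (u t z ^ 2 - deriv (u t) z ^ 2) * m t z) := by
      funext y'; rw [hP1 y', W1 hu1D hm1D hrel1D]
    rw [← sliceX_deriv (pdx_contDiff hQMc) t y, hfun, W2 hu1D hm1D hrel1D]
  have hP3 : ∀ y, pdx (pdx (pdx QM)) (t, y)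
      = P3e (u t y) (deriv (u t) y) (m t y) (deriv (m t) y) (deriv (deriv (m t)) y)
          (deriv (deriv (deriv (m t))) y) := by
    intro y
    have hfun : (fun y' => pdx (pdx QM) (t, y'))
        = deriv (deriv (fun z => (u t z ^ 2 - deriv (u t) z ^ 2) * m t z)) := by
      funext y'; rw [hP2 y', W2 hu1D hm1D hrel1D]
    rw [← sliceX_deriv (pdx_contDiff (pdx_contDiff hQMc)) t y, hfun, W3 hu1D hm1D hrel1D]
  have hA : ∀ x, pdt M2 (t, x)
      = -(P1e (u t x) (deriv (u t) x) (m t x) (deriv (m t) x)) := by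
    intro x; rw [hMteq t x, hP1 x]
  have hB : ∀ x, pdt (pdx M2) (t, x)
      = -(P2e (u t x) (deriv (u t) x) (m t x) (deriv (m t) x) (deriv (deriv (m t)) x)) := by
    intro x
    rw [pdtx_swap hM2c (t, x), hMt_fun, pdx_neg, hP2 x]
  have hC : ∀ x, pdt (pdx (pdx M2)) (t, x)
      = -(P3e (u t x) (deriv (u t) x) (m t x) (deriv (m t) x) (deriv (deriv (m t)) x)
          (deriv (deriv (deriv (m t))) x)) := by
    intro x
    have hfun : pdt (pdx M2) = fun p => -(pdx (pdx QM) p) := by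
      funext p; rw [pdtx_swap hM2c p, hMt_fun, pdx_neg]
    rw [pdtx_swap (pdx_contDiff hM2c) (t, x), hfun, pdx_neg, hP3 x]
  -- the time derivative of the density
  have hρt : ∀ x, deriv (fun s => ρ s x) t
      = tder (m t x) (deriv (m t) x) (deriv (deriv (m t)) x)
          (-(P1e (u t x) (deriv (u t) x) (m t x) (deriv (m t) x)))
          (-(P2e (u t x) (deriv (u t) x) (m t x) (deriv (m t) x) (deriv (deriv (m t)) x)))
          (-(P3e (u t x) (deriv (u t) x) (m t x) (deriv (m t) x) (deriv (deriv (m t)) x)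
              (deriv (deriv (deriv (m t))) x))) := by
    intro x
    have hmne : ∀ s, M2 (s, x) ≠ 0 := fun s => by
      rw [← hmeq s x]; exact ne_of_gt (hpos s x)
    have hρfun : (fun s => ρ s x) = fun s =>
        (8*(pdx (pdx M2) (s, x))^2*(M2 (s, x))^2 + 20*(pdx M2 (s, x))^2*(M2 (s, x))^2
          - 56*(pdx M2 (s, x))^4 + (M2 (s, x))^4) / (16*(M2 (s, x))^9) - 1/(16*κ^5) := by
      funext s
      rw [hρ s x, hder2_m s x, hder_m s x, hmeq s x]
      have h := hmne s
      field_simp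
      ring
    rw [hρfun]
    have hA0 : HasDerivAt (fun s => M2 (s, x)) (pdt M2 (t, x)) t := sliceT hM2c t x
    have hB0 : HasDerivAt (fun s => pdx M2 (s, x)) (pdt (pdx M2) (t, x)) t :=
      sliceT (pdx_contDiff hM2c) t x
    have hC0 : HasDerivAt (fun s => pdx (pdx M2) (s, x)) (pdt (pdx (pdx M2)) (t, x)) t :=
      sliceT (pdx_contDiff (pdx_contDiff hM2c)) t x
    have hnum := (((((hC0.pow 2).const_mul (8:ℝ)).mul (hA0.pow 2)).add
        (((hB0.pow 2).const_mul (20:ℝ)).mul (hA0.pow 2))).sub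
        ((hB0.pow 4).const_mul (56:ℝ))).add (hA0.pow 4)
    have hden := (hA0.pow 9).const_mul (16:ℝ)
    have hdne : 16 * M2 (t, x) ^ 9 ≠ 0 :=
      mul_ne_zero (by norm_num) (pow_ne_zero 9 (hmne t))
    have h := (hnum.div hden hdne).sub_const (1/(16*κ^5))
    refine h.deriv.trans ?_
    simp only [Pi.pow_apply, Pi.mul_apply, Pi.div_apply, Pi.sub_apply, Pi.add_apply, Nat.cast_ofNat, Nat.reduceSub]
    rw [hA x, hB x, hC x, ← hmeq t x, ← hder_m t x, ← hder2_m t x]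
    have hmne' : m t x ≠ 0 := ne_of_gt (hpos t x)
    simp only [tder]
    field_simp
    ring
  -- pointwise: the flux is an antiderivative of the integrand
  have hkey : ∀ x, HasDerivAt (fun z => fluxN (u t z) (deriv (u t) z) (m t z)
      (deriv (m t) z) (deriv (deriv (m t)) z) / (16 * m t z ^ 9))
      (deriv (fun s => ρ s x) t) x := by
    intro x
    rw [hρt x]
    exact flux_hasDeriv hu1D hm1D hrel1D hpos1D x
  -- limits of the flux at ±∞
  obtain ⟨g, hg⟩ := hSu t
  obtain ⟨f, hf⟩ := hSm t
  have hufun : u t = fun y => g y + κ := by funext y; have := hg y; linarith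
  have hmfun : m t = fun y => f y + κ := by funext y; have := hf y; linarith
  have hu1fun : deriv (u t) = fun y => derivCLM ℝ ℝ g y := by
    funext y; rw [hufun, deriv_add_const]
    exact (derivCLM_apply ℝ g y).symm
  have hm1fun : deriv (m t) = fun y => derivCLM ℝ ℝ f y := by
    funext y; rw [hmfun, deriv_add_const]
    exact (derivCLM_apply ℝ f y).symm
  have hm2fun : deriv (deriv (m t)) = fun y => derivCLM ℝ ℝ (derivCLM ℝ ℝ f) y := by
    funext y; rw [hm1fun]
    exact (derivCLM_apply ℝ (derivCLM ℝ ℝ f) y).symm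
  have t1 : Filter.Tendsto (u t) Filter.atTop (nhds κ) := by
    rw [hufun]; simpa using (schwartz_tendsto_top g).add tendsto_const_nhds
  have t2 : Filter.Tendsto (deriv (u t)) Filter.atTop (nhds 0) := by
    rw [hu1fun]; exact schwartz_tendsto_top (derivCLM ℝ ℝ g)
  have t3 : Filter.Tendsto (m t) Filter.atTop (nhds κ) := by
    rw [hmfun]; simpa using (schwartz_tendsto_top f).add tendsto_const_nhds
  have t4 : Filter.Tendsto (deriv (m t)) Filter.atTop (nhds 0) := by
    rw [hm1fun]; exact schwartz_tendsto_top (derivCLM ℝ ℝ f)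
  have t5 : Filter.Tendsto (deriv (deriv (m t))) Filter.atTop (nhds 0) := by
    rw [hm2fun]; exact schwartz_tendsto_top (derivCLM ℝ ℝ (derivCLM ℝ ℝ f))
  have b1 : Filter.Tendsto (u t) Filter.atBot (nhds κ) := by
    rw [hufun]; simpa using (schwartz_tendsto_bot g).add tendsto_const_nhds
  have b2 : Filter.Tendsto (deriv (u t)) Filter.atBot (nhds 0) := by
    rw [hu1fun]; exact schwartz_tendsto_bot (derivCLM ℝ ℝ g)
  have b3 : Filter.Tendsto (m t) Filter.atBot (nhds κ) := by
    rw [hmfun]; simpa using (schwartz_tendsto_bot f).add tendsto_const_nhds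
  have b4 : Filter.Tendsto (deriv (m t)) Filter.atBot (nhds 0) := by
    rw [hm1fun]; exact schwartz_tendsto_bot (derivCLM ℝ ℝ f)
  have b5 : Filter.Tendsto (deriv (deriv (m t))) Filter.atBot (nhds 0) := by
    rw [hm2fun]; exact schwartz_tendsto_bot (derivCLM ℝ ℝ (derivCLM ℝ ℝ f))
  have htop : Filter.Tendsto (fun z => fluxN (u t z) (deriv (u t) z) (m t z)
      (deriv (m t) z) (deriv (deriv (m t)) z) / (16 * m t z ^ 9)) Filter.atTop
      (nhds (fluxN κ 0 κ 0 0 / (16 * κ ^ 9))) := flux_tendsto hκ t1 t2 t3 t4 t5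
  have hbot : Filter.Tendsto (fun z => fluxN (u t z) (deriv (u t) z) (m t z)
      (deriv (m t) z) (deriv (deriv (m t)) z) / (16 * m t z ^ 9)) Filter.atBot
      (nhds (fluxN κ 0 κ 0 0 / (16 * κ ^ 9))) := flux_tendsto hκ b1 b2 b3 b4 b5
  by_cases hI : Integrable (fun x => deriv (fun s => ρ s x) t)
  · rw [MeasureTheory.integral_of_hasDerivAt_of_tendsto hkey hI hbot htop]
    exact sub_self _
  · exact integral_undef hI
end OneD
end

section
/- Let p : ℝ×ℝ → ℝ be infinitely differentiable in the variables (y,τ) with p(y,τ) > 0 everywhere. Set m = 1/p and define u = m + (1/2)·m·(∂_τ∂_y p). If m_τ + 2·m³·u_y = 0 at every point, then p satisfies the associated mCH equation p·p_τyy − p_y·p_τy − p³·p_τ − 2·p_y = 0 at every point (subscripts denote partial derivatives, with mixed partials taken in any order). -/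
lemma pdSmooth (F : ℝ×ℝ → ℝ) (hF : ContDiff ℝ (⊤ : ℕ∞) F) (v : ℝ×ℝ) :
    ContDiff ℝ (⊤ : ℕ∞) (fun x => fderiv ℝ F x v) :=
  (hF.fderiv_right (by simp)).clm_apply contDiff_const

lemma pdL (F : ℝ×ℝ → ℝ) (hF : ContDiff ℝ (⊤ : ℕ∞) F) (y τ : ℝ) :
    HasDerivAt (fun y' => F (y', τ)) (fderiv ℝ F (y, τ) (1,0)) y :=
  (hF.differentiable (by simp) (y,τ)).hasFDerivAt.comp_hasDerivAt y
    ((hasDerivAt_id y).prodMk (hasDerivAt_const y τ))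

lemma pdR (F : ℝ×ℝ → ℝ) (hF : ContDiff ℝ (⊤ : ℕ∞) F) (y τ : ℝ) :
    HasDerivAt (fun τ' => F (y, τ')) (fderiv ℝ F (y, τ) (0,1)) τ :=
  (hF.differentiable (by simp) (y,τ)).hasFDerivAt.comp_hasDerivAt τ
    ((hasDerivAt_const τ y).prodMk (hasDerivAt_id τ))

lemma pdApply (F : ℝ×ℝ → ℝ) (hF : ContDiff ℝ (⊤ : ℕ∞) F) (x v w : ℝ×ℝ) :
    fderiv ℝ (fun z => fderiv ℝ F z w) x v = fderiv ℝ (fderiv ℝ F) x v w := by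
  have hd : DifferentiableAt ℝ (fderiv ℝ F) x :=
    ((hF.fderiv_right (m := (⊤ : ℕ∞)) (by simp)).differentiable (by simp)) x
  rw [fderiv_clm_apply hd (differentiableAt_const w)]
  simp

lemma pdSymm (F : ℝ×ℝ → ℝ) (hF : ContDiff ℝ (⊤ : ℕ∞) F) (x : ℝ×ℝ) (v w : ℝ×ℝ) :
    fderiv ℝ (fun z => fderiv ℝ F z w) x v = fderiv ℝ (fun z => fderiv ℝ F z v) x w := by
  rw [pdApply F hF x v w, pdApply F hF x w v]
  exact (hF.contDiffAt.isSymmSndFDerivAt (by rw [minSmoothness_of_isRCLikeNormedField]; exact WithTop.coe_le_coe.2 le_top)).eq v w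

/-- under the reciprocal transformation, if `m = 1/p` and
`u = m + (1/2)·m·p_τy` satisfy `m_τ + 2m³u_y = 0`, then `p` satisfies the
associated mCH equation `p·p_τyy − p_y·p_τy − p³·p_τ − 2·p_y = 0`.
Here `p y τ` has first argument `y` and second argument `τ`. -/
theorem associated_mCH (p m u : ℝ → ℝ → ℝ)
    (hp : ContDiff ℝ (⊤ : ℕ∞) (Function.uncurry p))
    (hppos : ∀ y τ, 0 < p y τ)
    (hm : ∀ y τ, m y τ = 1 / p y τ)
    (hu : ∀ y τ, u y τ = m y τ + (1 / 2) * m y τ *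
        deriv (fun τ' => deriv (fun y' => p y' τ') y) τ)
    (heq : ∀ y τ, deriv (m y) τ + 2 * (m y τ) ^ 3 * deriv (fun y' => u y' τ) y = 0) :
    ∀ y τ,
      p y τ * deriv (fun y' => deriv (fun y'' => deriv (p y'') τ) y') y
        - deriv (fun y' => p y' τ) y * deriv (fun y' => deriv (p y') τ) y
        - (p y τ) ^ 3 * deriv (p y) τ
        - 2 * deriv (fun y' => p y' τ) y = 0 := by
  intro y τ
  set f : ℝ×ℝ → ℝ := Function.uncurry p with hf
  set G : ℝ×ℝ → ℝ := fun z => fderiv ℝ f z (1,0) with hGdef   -- p_y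
  set T : ℝ×ℝ → ℝ := fun z => fderiv ℝ f z (0,1) with hTdef   -- p_τ
  set H : ℝ×ℝ → ℝ := fun z => fderiv ℝ G z (0,1) with hHdef   -- p_yτ
  set Ty : ℝ×ℝ → ℝ := fun z => fderiv ℝ T z (1,0) with hTydef -- p_τy
  have hG' : ContDiff ℝ (⊤ : ℕ∞) G := pdSmooth f hp _
  have hT' : ContDiff ℝ (⊤ : ℕ∞) T := pdSmooth f hp _
  have hH' : ContDiff ℝ (⊤ : ℕ∞) H := pdSmooth G hG' _
  have hTy' : ContDiff ℝ (⊤ : ℕ∞) Ty := pdSmooth T hT' _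
  have hHTy : H = Ty := funext fun z => pdSymm f hp z (0,1) (1,0)
  have hPne : p y τ ≠ 0 := ne_of_gt (hppos y τ)
  -- basic first partials as curried derivs
  have dY : ∀ a b, deriv (fun y' => p y' b) a = G (a, b) :=
    fun a b => (pdL f hp a b).deriv
  have dT : ∀ a b, deriv (p a) b = T (a, b) := fun a b => (pdR f hp a b).deriv
  -- rewrite the goal's higher derivatives
  have eT : ∀ b, (fun y'' => deriv (p y'') b) = fun y'' => T (y'', b) :=
    fun b => funext fun a => dT a b
  have dTy : ∀ a b, deriv (fun y'' => deriv (p y'') b) a = Ty (a, b) := by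
    intro a b; rw [eT b]; exact (pdL T hT' a b).deriv
  have dTyy : deriv (fun y' => deriv (fun y'' => deriv (p y'') τ) y') y
      = fderiv ℝ Ty (y, τ) (1, 0) := by
    have : (fun y' => deriv (fun y'' => deriv (p y'') τ) y') = fun y' => Ty (y', τ) :=
      funext fun a => dTy a τ
    rw [this]; exact (pdL Ty hTy' y τ).deriv
  -- compute deriv (m y) τ
  have hmfun : m y = fun τ' => (p y τ')⁻¹ := funext fun τ' => by rw [hm]; exact one_div _
  have dm : deriv (m y) τ = -(T (y, τ)) / (p y τ) ^ 2 := by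
    rw [hmfun]; exact ((pdR f hp y τ).inv hPne).deriv
  -- compute u as explicit function of y'
  have hufun : (fun y' => u y' τ)
      = fun y' => (p y' τ)⁻¹ + (1 / 2) * (p y' τ)⁻¹ * H (y', τ) := by
    funext y'
    rw [hu, hm, one_div]
    congr 1
    have e1 : (fun τ' => deriv (fun y'' => p y'' τ') y') = fun τ' => G (y', τ') :=
      funext fun b => dY y' b
    rw [e1]
    congr 1
    exact (pdR G hG' y' τ).deriv
  -- derivative of u in y
  have h1 : HasDerivAt (fun y' => p y' τ) (G (y, τ)) y := pdL f hp y τ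
  have h1i : HasDerivAt (fun y' => (p y' τ)⁻¹) (-(G (y, τ)) / (p y τ) ^ 2) y :=
    h1.inv hPne
  have h2 : HasDerivAt (fun y' => H (y', τ)) (fderiv ℝ H (y, τ) (1, 0)) y := pdL H hH' y τ
  have du : deriv (fun y' => u y' τ)
      y = -(G (y, τ)) / (p y τ) ^ 2
        + ((1 / 2) * (-(G (y, τ)) / (p y τ) ^ 2) * H (y, τ)
            + (1 / 2) * (p y τ)⁻¹ * fderiv ℝ H (y, τ) (1, 0)) := by
    rw [hufun]
    exact (h1i.add ((h1i.const_mul (1/2 : ℝ)).mul h2)).deriv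
  have key := heq y τ
  rw [dm, du, hm] at key
  rw [dTyy, dY, dTy, dT]
  rw [hHTy] at key
  have hfH : fderiv ℝ Ty (y, τ) (1, 0) = fderiv ℝ Ty (y, τ) (1, 0) := rfl
  set P := p y τ
  set A := G (y, τ)
  set B := T (y, τ)
  set C := Ty (y, τ)
  set D := fderiv ℝ Ty (y, τ) (1, 0)
  field_simp at key
  have h5 : (4 : ℝ) * P ^ 5 ≠ 0 := by positivity
  have hz : (4 * P ^ 5) * (P * D - A * C - P ^ 3 * B - 2 * A) = 0 := by
    linear_combination (4 * P ^ 5) * key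
  exact (mul_eq_zero.1 hz).resolve_left h5
end

section
/- Let c, A ∈ ℝ and let φ : ℝ → ℝ be twice continuously differentiable with (φ(x) − φ''(x))·((φ'(x))² − φ(x)² + c) = A for all x ∈ ℝ. Then the function x ↦ (φ(x)² − (φ'(x))² − c)² + 4·A·φ(x) is constant on ℝ. -/
/-!
Along any twice differentiable φ, the derivative of `(φ² − (φ')² − c)² + 4Aφ` factors as
`4φ' · (A − (φ − φ'')((φ')² − φ² + c))`, so the ODE makes it vanish identically.
-/

theorem hasDerivAt_firstIntegral {φ φ' : ℝ → ℝ} {x φ'' : ℝ} (c A : ℝ)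
    (hφ : HasDerivAt φ (φ' x) x) (hφ' : HasDerivAt φ' φ'' x) :
    HasDerivAt (fun y => (φ y ^ 2 - φ' y ^ 2 - c) ^ 2 + 4 * A * φ y)
      (4 * φ' x * (A - (φ x - φ'') * (φ' x ^ 2 - φ x ^ 2 + c))) x := by
  refine ((((hφ.pow 2).sub (hφ'.pow 2)).sub_const c).pow 2).add
    (hφ.const_mul (4 * A)) |>.congr_deriv ?_
  simp only [Pi.sub_apply, Pi.pow_apply]
  ring

/-- the traveling-wave ODE `(φ − φ'')((φ')² − φ² + c) = A` has the
first integral `(φ² − (φ')² − c)² + 4Aφ`, i.e. this function is constant. -/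
theorem first_integral (c A : ℝ) (φ : ℝ → ℝ)
    (hφ : ContDiff ℝ 2 φ)
    (hODE : ∀ x, (φ x - deriv (deriv φ) x) * ((deriv φ x) ^ 2 - (φ x) ^ 2 + c) = A) :
    ∀ x y,
      ((φ x) ^ 2 - (deriv φ x) ^ 2 - c) ^ 2 + 4 * A * φ x
        = ((φ y) ^ 2 - (deriv φ y) ^ 2 - c) ^ 2 + 4 * A * φ y := by
  have hderiv : ∀ x, HasDerivAt
      (fun y => (φ y ^ 2 - deriv φ y ^ 2 - c) ^ 2 + 4 * A * φ y) 0 x := fun x => by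
    have h := hasDerivAt_firstIntegral c A (hφ.differentiable two_ne_zero x).hasDerivAt
      (hφ.differentiable_deriv_two x).hasDerivAt
    rwa [hODE x, sub_self, mul_zero] at h
  exact is_const_of_deriv_eq_zero (fun x => (hderiv x).differentiableAt)
    (fun x => (hderiv x).deriv)
end

section
/- Let c, A, E ∈ ℝ with A ≠ 0, and let φ : ℝ → ℝ be three times continuously differentiable such that for all x: (φ − φ'')·((φ')² − φ² + c) = A, E − 4·A·φ(x) > 0, and φ² − (φ')² − c = −√(E − 4Aφ). Then the function μ := φ − φ'' satisfies, for all x: μ = A/√(E − 4Aφ) and μ' = (2/A)·φ'·μ³. -/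
/-! On the homoclinic branch the bracket `(φ')² − φ² + c` equals `√(E − 4Aφ)`, so the ODE reads
`μ · √(E − 4Aφ) = A`. Differentiating `μ = A / √(E − 4Aφ)` by the chain rule gives
`μ' = 2A²φ' / √(E − 4Aφ)³ = (2/A) φ' μ³`. -/

lemma eq_div_of_mul_eq_of_branch {μ φ φ' c A s : ℝ} (hs : s ≠ 0)
    (hODE : μ * (φ' ^ 2 - φ ^ 2 + c) = A) (hbranch : φ ^ 2 - φ' ^ 2 - c = -s) :
    μ = A / s := by
  rw [eq_div_iff hs, ← hODE]
  congr 1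
  linarith

lemma HasDerivAt.const_div_sqrt_sub_const_mul {f : ℝ → ℝ} {f' x : ℝ} (A E : ℝ)
    (hf : HasDerivAt f f' x) (hpos : 0 < E - 4 * A * f x) :
    HasDerivAt (fun y => A / √(E - 4 * A * f y))
      ((2 / A) * f' * (A / √(E - 4 * A * f x)) ^ 3) x := by
  have hs : √(E - 4 * A * f x) ≠ 0 := (Real.sqrt_pos.mpr hpos).ne'
  have hsqrt : HasDerivAt (fun y => √(E - 4 * A * f y))
      (-(4 * A * f') / (2 * √(E - 4 * A * f x))) x :=
    ((hf.const_mul (4 * A)).const_sub E).sqrt hpos.ne'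
  refine ((hasDerivAt_const x A).fun_div hsqrt hs).congr_deriv ?_
  -- at `A = 0` both sides vanish, the left one through the junk value `2 / 0 = 0`
  rcases eq_or_ne A 0 with rfl | hA
  · simp
  · field_simp
    ring

theorem one_soliton_momentum_general (c A E : ℝ) (φ : ℝ → ℝ)
    (hφ : ContDiff ℝ 3 φ)
    (hODE : ∀ x, (φ x - deriv (deriv φ) x) * ((deriv φ x) ^ 2 - (φ x) ^ 2 + c) = A)
    (hpos : ∀ x, 0 < E - 4 * A * φ x)
    (hbranch : ∀ x, (φ x) ^ 2 - (deriv φ x) ^ 2 - c = -Real.sqrt (E - 4 * A * φ x)) :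
    ∀ x,
      (φ x - deriv (deriv φ) x = A / Real.sqrt (E - 4 * A * φ x))
      ∧ deriv (fun y => φ y - deriv (deriv φ) y) x
          = (2 / A) * deriv φ x * (φ x - deriv (deriv φ) x) ^ 3 := by
  have hμ : ∀ y, φ y - deriv (deriv φ) y = A / √(E - 4 * A * φ y) := fun y =>
    eq_div_of_mul_eq_of_branch (Real.sqrt_pos.mpr (hpos y)).ne' (hODE y) (hbranch y)
  intro x
  refine ⟨hμ x, ?_⟩
  have hφ' : HasDerivAt φ (deriv φ x) x := (hφ.differentiable (by norm_num) x).hasDerivAt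
  rw [funext hμ, hμ x]
  exact (hφ'.const_div_sqrt_sub_const_mul A E (hpos x)).deriv

/-- on the homoclinic branch `φ² − (φ')² − c = −√(E − 4Aφ)`,
the momentum profile `μ = φ − φ''` satisfies `μ = A/√(E − 4Aφ)` and
`μ' = (2/A)·φ'·μ³`. -/
theorem one_soliton_momentum (c A E : ℝ) (hA : A ≠ 0) (φ : ℝ → ℝ)
    (hφ : ContDiff ℝ 3 φ)
    (hODE : ∀ x, (φ x - deriv (deriv φ) x) * ((deriv φ x) ^ 2 - (φ x) ^ 2 + c) = A)
    (hpos : ∀ x, 0 < E - 4 * A * φ x)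
    (hbranch : ∀ x, (φ x) ^ 2 - (deriv φ x) ^ 2 - c = -Real.sqrt (E - 4 * A * φ x)) :
    ∀ x,
      (φ x - deriv (deriv φ) x = A / Real.sqrt (E - 4 * A * φ x))
      ∧ deriv (fun y => φ y - deriv (deriv φ) y) x
          = (2 / A) * deriv φ x * (φ x - deriv (deriv φ) x) ^ 3 :=
  one_soliton_momentum_general c A E φ hφ hODE hpos hbranch
end

section
/- Let c, A, E ∈ ℝ with A ≠ 0, and let φ : ℝ → ℝ be three times continuously differentiable such that for all x: (φ − φ'')·((φ')² − φ² + c) = A, E − 4·A·φ(x) > 0, and φ² − (φ')² − c = −√(E − 4Aφ). Then μ := φ − φ'' satisfies the first-order equation (μ')² = (1/4)·μ² − (E/(2A²))·μ⁴ + (4/A)·μ⁵ + (E²/(4A⁴) − 4c/A²)·μ⁶ at every point. -/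
/-! On the homoclinic branch the second factor of the profile equation equals
`s := √(E − 4Aφ)`, so the momentum is the explicit function `μ = A / s` of `φ` alone.
Differentiating gives `μ' = 2A²φ'/s³`; squaring and eliminating `φ'²` through the branch
relation `φ'² = φ² − c + s`, and `φ` through `4Aφ = E − s²`, leaves a polynomial identity
in `s = A / μ`. -/

open Real

lemma HasDerivAt.const_div_sqrt {g : ℝ → ℝ} {g' x : ℝ} (a : ℝ) (hg : HasDerivAt g g' x)
    (hpos : 0 < g x) :
    HasDerivAt (fun y => a / √(g y)) (-(a * g') / (2 * √(g x) ^ 3)) x := by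
  have hs : √(g x) ≠ 0 := (sqrt_pos.2 hpos).ne'
  refine ((hasDerivAt_const x a).fun_div (hg.sqrt hpos.ne') hs).congr_deriv ?_
  ring

lemma momentum_eq_div_sqrt {c A E φ φ₁ μ : ℝ} (hpos : 0 < E - 4 * A * φ)
    (hODE : μ * (φ₁ ^ 2 - φ ^ 2 + c) = A)
    (hbranch : φ ^ 2 - φ₁ ^ 2 - c = -√(E - 4 * A * φ)) :
    μ = A / √(E - 4 * A * φ) := by
  have hfactor : φ₁ ^ 2 - φ ^ 2 + c = √(E - 4 * A * φ) := by linarith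
  rw [eq_div_iff (sqrt_pos.2 hpos).ne', ← hfactor, hODE]

lemma sq_momentum_deriv_eq {c A E φ φ₁ s : ℝ} (hs : s ≠ 0) (hs2 : s ^ 2 = E - 4 * A * φ)
    (hφ₁ : φ₁ ^ 2 = φ ^ 2 - c + s) :
    (2 * A ^ 2 * φ₁ / s ^ 3) ^ 2
      = (1 / 4) * (A / s) ^ 2 - (E / (2 * A ^ 2)) * (A / s) ^ 4 + (4 / A) * (A / s) ^ 5
        + (E ^ 2 / (4 * A ^ 4) - 4 * c / A ^ 2) * (A / s) ^ 6 := by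
  rcases eq_or_ne A 0 with rfl | hA
  · -- with `x / 0 = 0` both sides vanish
    simp
  field_simp
  linear_combination (32 * A ^ 2) * hφ₁ + (8 * A * φ + 2 * E - 2 * s ^ 2) * hs2

theorem one_soliton_first_order_general (c A E : ℝ) (φ : ℝ → ℝ)
    (hφ : ContDiff ℝ 3 φ)
    (hODE : ∀ x, (φ x - deriv (deriv φ) x) * ((deriv φ x) ^ 2 - (φ x) ^ 2 + c) = A)
    (hpos : ∀ x, 0 < E - 4 * A * φ x)
    (hbranch : ∀ x, (φ x) ^ 2 - (deriv φ x) ^ 2 - c = -Real.sqrt (E - 4 * A * φ x)) :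
    ∀ x,
      (deriv (fun y => φ y - deriv (deriv φ) y) x) ^ 2
        = (1 / 4) * (φ x - deriv (deriv φ) x) ^ 2
          - (E / (2 * A ^ 2)) * (φ x - deriv (deriv φ) x) ^ 4
          + (4 / A) * (φ x - deriv (deriv φ) x) ^ 5
          + (E ^ 2 / (4 * A ^ 4) - 4 * c / A ^ 2) * (φ x - deriv (deriv φ) x) ^ 6 := by
  intro x
  have hμ : (fun y => φ y - deriv (deriv φ) y) = fun y => A / √(E - 4 * A * φ y) :=
    funext fun y => momentum_eq_div_sqrt (hpos y) (hODE y) (hbranch y)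
  have hφx : HasDerivAt φ (deriv φ x) x := (hφ.differentiable (by norm_num) x).hasDerivAt
  have hμ' : HasDerivAt (fun y => A / √(E - 4 * A * φ y))
      (2 * A ^ 2 * deriv φ x / √(E - 4 * A * φ x) ^ 3) x := by
    refine (((hφx.const_mul (4 * A)).const_sub E).const_div_sqrt A (hpos x)).congr_deriv ?_
    ring
  rw [hμ, hμ'.deriv, congrFun hμ x]
  exact sq_momentum_deriv_eq (sqrt_pos.2 (hpos x)).ne' (sq_sqrt (hpos x).le)
    (by linarith [hbranch x])

/-- on the homoclinic branch, the momentum profile `μ = φ − φ''`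
satisfies the first-order equation
`(μ')² = μ²/4 − (E/(2A²))μ⁴ + (4/A)μ⁵ + (E²/(4A⁴) − 4c/A²)μ⁶`. -/
theorem one_soliton_first_order (c A E : ℝ) (hA : A ≠ 0) (φ : ℝ → ℝ)
    (hφ : ContDiff ℝ 3 φ)
    (hODE : ∀ x, (φ x - deriv (deriv φ) x) * ((deriv φ x) ^ 2 - (φ x) ^ 2 + c) = A)
    (hpos : ∀ x, 0 < E - 4 * A * φ x)
    (hbranch : ∀ x, (φ x) ^ 2 - (deriv φ x) ^ 2 - c = -Real.sqrt (E - 4 * A * φ x)) :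
    ∀ x,
      (deriv (fun y => φ y - deriv (deriv φ) y) x) ^ 2
        = (1 / 4) * (φ x - deriv (deriv φ) x) ^ 2
          - (E / (2 * A ^ 2)) * (φ x - deriv (deriv φ) x) ^ 4
          + (4 / A) * (φ x - deriv (deriv φ) x) ^ 5
          + (E ^ 2 / (4 * A ^ 4) - 4 * c / A ^ 2) * (φ x - deriv (deriv φ) x) ^ 6 :=
  one_soliton_first_order_general c A E φ hφ hODE hpos hbranch
end

section
/- Let κ > 0 and c ∈ ℝ with c ≠ κ², and set A = κ(c − κ²), E = (c − κ²)(c + 3κ²). Let μ : ℝ → ℝ be twice continuously differentiable with μ(x) > 0 for all x and satisfying (μ')² = (1/4)·μ² − (E/(2A²))·μ⁴ + (4/A)·μ⁵ + (E²/(4A⁴) − 4c/A²)·μ⁶ everywhere. Then for all x, G₂(μ)(x)·μ'(x) = [(c + 3κ²)/(2κ²(c − κ²))]·G₁(μ)(x)·μ'(x), where G₁(μ) = 1/κ² − 1/μ² and G₂(μ) = −2μ''/μ⁵ + 5(μ')²/μ⁶ − 3/(4μ⁴) + 3/(4κ⁴). -/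
/-!
Differentiating `(μ')² = P(μ)`, where `P = Soliton.rhs A E c`, gives `2 μ' μ'' = P'(μ) μ'`.
So after multiplying by `μ'`, both `μ''` and `(μ')²` can be eliminated from `G₂(μ)`. What
remains is the rational identity
`5 P(m)/m⁶ − P'(m)/m⁵ − 3/(4m⁴) + 3/(4κ⁴) = ω₁ (1/κ² − 1/m²)`,
in which the `m⁵` term of `P` cancels because `5m⁵ − m · 5m⁴ = 0`.
-/

theorem two_mul_deriv_mul_deriv_deriv_of_deriv_sq_eq {f g : ℝ → ℝ} {g' x : ℝ}
    (hf : DifferentiableAt ℝ f x) (hf' : DifferentiableAt ℝ (deriv f) x)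
    (hg : HasDerivAt g g' (f x)) (h : ∀ y, deriv f y ^ 2 = g (f y)) :
    2 * deriv f x * deriv (deriv f) x = g' * deriv f x := by
  have hsq : HasDerivAt (fun y => deriv f y ^ 2) (2 * deriv f x * deriv (deriv f) x) x := by
    simpa using hf'.hasDerivAt.fun_pow 2
  have hcomp : HasDerivAt (fun y => g (f y)) (g' * deriv f x) x := hg.comp x hf.hasDerivAt
  rw [funext h] at hsq
  exact hsq.unique hcomp

noncomputable section

namespace Soliton

def rhs (A E c m : ℝ) : ℝ :=
  (1 / 4) * m ^ 2 - (E / (2 * A ^ 2)) * m ^ 4 + (4 / A) * m ^ 5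
    + (E ^ 2 / (4 * A ^ 4) - 4 * c / A ^ 2) * m ^ 6

def rhsDeriv (A E c m : ℝ) : ℝ :=
  (1 / 2) * m - (2 * E / A ^ 2) * m ^ 3 + (20 / A) * m ^ 4
    + 6 * (E ^ 2 / (4 * A ^ 4) - 4 * c / A ^ 2) * m ^ 5

theorem hasDerivAt_rhs (A E c m : ℝ) : HasDerivAt (rhs A E c) (rhsDeriv A E c m) m := by
  refine ((((((hasDerivAt_pow 2 m).const_mul (1 / 4 : ℝ)).fun_sub
    ((hasDerivAt_pow 4 m).const_mul (E / (2 * A ^ 2)))).fun_add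
    ((hasDerivAt_pow 5 m).const_mul (4 / A))).fun_add
    ((hasDerivAt_pow 6 m).const_mul (E ^ 2 / (4 * A ^ 4) - 4 * c / A ^ 2)))).congr_deriv ?_
  simp only [rhsDeriv]
  push_cast
  ring

theorem reduced_G2_eq_omega1_mul_G1 {κ c A E m : ℝ} (hκ : κ ≠ 0) (hc : c ≠ κ ^ 2) (hm : m ≠ 0)
    (hA : A = κ * (c - κ ^ 2)) (hE : E = (c - κ ^ 2) * (c + 3 * κ ^ 2)) :
    -rhsDeriv A E c m / m ^ 5 + 5 * rhs A E c m / m ^ 6 - 3 / (4 * m ^ 4) + 3 / (4 * κ ^ 4)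
      = (c + 3 * κ ^ 2) / (2 * κ ^ 2 * (c - κ ^ 2)) * (1 / κ ^ 2 - 1 / m ^ 2) := by
  have hcκ : c - κ ^ 2 ≠ 0 := sub_ne_zero.mpr hc
  subst hA hE
  simp only [rhs, rhsDeriv]
  field_simp
  ring

end Soliton

end

open Soliton in
/-- the single-soliton variational identity
`G₂(μ)·μ' = ω₁(c)·G₁(μ)·μ'` with `ω₁(c) = (c+3κ²)/(2κ²(c−κ²))`, for a positive
solution `μ` of the first-order soliton ODE. -/
theorem G2_eq_omega1_G1 (κ c : ℝ) (hκ : 0 < κ) (hc : c ≠ κ ^ 2)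
    (A E : ℝ) (hA : A = κ * (c - κ ^ 2)) (hE : E = (c - κ ^ 2) * (c + 3 * κ ^ 2))
    (μ : ℝ → ℝ) (hμ : ContDiff ℝ 2 μ) (hpos : ∀ x, 0 < μ x)
    (hODE : ∀ x, (deriv μ x) ^ 2
      = (1 / 4) * (μ x) ^ 2 - (E / (2 * A ^ 2)) * (μ x) ^ 4
        + (4 / A) * (μ x) ^ 5 + (E ^ 2 / (4 * A ^ 4) - 4 * c / A ^ 2) * (μ x) ^ 6) :
    ∀ x,
      (-2 * deriv (deriv μ) x / (μ x) ^ 5 + 5 * (deriv μ x) ^ 2 / (μ x) ^ 6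
          - 3 / (4 * (μ x) ^ 4) + 3 / (4 * κ ^ 4)) * deriv μ x
        = ((c + 3 * κ ^ 2) / (2 * κ ^ 2 * (c - κ ^ 2)))
            * (1 / κ ^ 2 - 1 / (μ x) ^ 2) * deriv μ x := by
  intro x
  have hd : Differentiable ℝ μ := hμ.differentiable two_ne_zero
  have hd' : Differentiable ℝ (deriv μ) :=
    (contDiff_succ_iff_deriv (n := 1).mp hμ).2.2.differentiable one_ne_zero
  have hsq : deriv μ x ^ 2 = rhs A E c (μ x) := hODE x
  have hmul : 2 * deriv μ x * deriv (deriv μ) x = rhsDeriv A E c (μ x) * deriv μ x :=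
    two_mul_deriv_mul_deriv_deriv_of_deriv_sq_eq (hd x) (hd' x) (hasDerivAt_rhs A E c _) hODE
  rw [← reduced_G2_eq_omega1_mul_G1 hκ.ne' hc (hpos x).ne' hA hE]
  calc _ = -(2 * deriv μ x * deriv (deriv μ) x) / μ x ^ 5
          + 5 * deriv μ x ^ 2 * deriv μ x / μ x ^ 6
          + (-3 / (4 * μ x ^ 4) + 3 / (4 * κ ^ 4)) * deriv μ x := by ring
    _ = _ := by rw [hmul, hsq]; ring
end

section
/- Let k₁ > k₂ > 0, let b₁, b₂, ψ₂ ∈ ℝ, set H = (k₁ − k₂)/(k₁ + k₂), and define ξᵢ(y) = kᵢ·y + bᵢ for i = 1, 2. Then for all y ∈ ℝ, Wr₃( 1 + e^{2ξ₂ − ψ₂}, (1 + H²·e^{2ξ₂ − ψ₂})·e^{ξ₁}, e^{ξ₂} )(y) = k₁·k₂·(k₁ + k₂)·H·e^{ξ₁(y) + ξ₂(y)}·( e^{2ξ₂(y) − ψ₂} + 1 )·( H·e^{2ξ₂(y) − ψ₂} − 1 ). -/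
/-!
Every entry of the Wronskian is a sum of terms `c * exp (a * y + b)`, so all derivatives are
explicit, and after factoring `exp ξ₁ * exp ξ₂` the determinant is a polynomial identity in
`w = exp (2 ξ₂ - ψ₂)`. By multilinearity in the first two columns it splits into four
Vandermonde determinants in the exponents `0, 2k₂ | k₁, k₁ + 2k₂ | k₂`; comparing coefficients
of `1, w, w²` leaves only multiples of `H (k₁ + k₂) - (k₁ - k₂)`.
-/

open Real

noncomputable def expAffine (c a b : ℝ) (y : ℝ) : ℝ := c * exp (a * y + b)

theorem hasDerivAt_expAffine (c a b y : ℝ) :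
    HasDerivAt (expAffine c a b) (expAffine (c * a) a b y) y :=
  ((((hasDerivAt_id' y).const_mul a).add_const b).exp.const_mul c).congr_deriv
    (by rw [expAffine]; ring)

theorem deriv_expAffine (c a b : ℝ) : deriv (expAffine c a b) = expAffine (c * a) a b :=
  funext fun y => (hasDerivAt_expAffine c a b y).deriv

theorem deriv_expAffine_add (c a b c' a' b' : ℝ) :
    deriv (expAffine c a b + expAffine c' a' b')
      = expAffine (c * a) a b + expAffine (c' * a') a' b' :=
  funext fun y => ((hasDerivAt_expAffine c a b y).add (hasDerivAt_expAffine c' a' b' y)).deriv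

theorem det_twoSoliton {R : Type*} [CommRing R] (k₁ k₂ H u v w : R) (hH : H * (k₁ + k₂) = k₁ - k₂) :
    Matrix.det !![1 + w, u * (1 + H ^ 2 * w), v;
      2 * k₂ * w, u * (k₁ + H ^ 2 * (k₁ + 2 * k₂) * w), k₂ * v;
      (2 * k₂) ^ 2 * w, u * (k₁ ^ 2 + H ^ 2 * (k₁ + 2 * k₂) ^ 2 * w), k₂ ^ 2 * v]
      = k₁ * k₂ * (k₁ + k₂) * H * (u * v) * (w + 1) * (H * w - 1) := by
  rw [Matrix.det_fin_three]
  simp only [Fin.isValue, Matrix.of_apply, Matrix.cons_val', Matrix.cons_val_zero,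
    Matrix.cons_val_fin_one, Matrix.cons_val_one, Matrix.cons_val]
  linear_combination
    (u * v * (k₁ * k₂ + w * (k₁ * k₂ - 2 * k₂ * (H * (k₁ + k₂) + (k₁ - k₂))))) * hH

/-- explicit evaluation of the third-order Wronskian `J₁`
appearing in the count of negative eigenvalues of the Hessian. -/
theorem wronskian_J1 (k₁ k₂ b₁ b₂ ψ₂ H : ℝ)
    (hk₂ : 0 < k₂) (hk : k₂ < k₁)
    (hH : H = (k₁ - k₂) / (k₁ + k₂))
    (ξ₁ ξ₂ : ℝ → ℝ)
    (hξ₁ : ∀ y, ξ₁ y = k₁ * y + b₁) (hξ₂ : ∀ y, ξ₂ y = k₂ * y + b₂)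
    (f₁ f₂ f₃ : ℝ → ℝ)
    (hf₁ : ∀ y, f₁ y = 1 + Real.exp (2 * ξ₂ y - ψ₂))
    (hf₂ : ∀ y, f₂ y = (1 + H ^ 2 * Real.exp (2 * ξ₂ y - ψ₂)) * Real.exp (ξ₁ y))
    (hf₃ : ∀ y, f₃ y = Real.exp (ξ₂ y)) :
    ∀ y : ℝ,
      Matrix.det !![f₁ y, f₂ y, f₃ y;
                    deriv f₁ y, deriv f₂ y, deriv f₃ y;
                    deriv (deriv f₁) y, deriv (deriv f₂) y, deriv (deriv f₃) y]
        = k₁ * k₂ * (k₁ + k₂) * H * Real.exp (ξ₁ y + ξ₂ y)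
            * (Real.exp (2 * ξ₂ y - ψ₂) + 1)
            * (H * Real.exp (2 * ξ₂ y - ψ₂) - 1) := by
  intro y
  have hu (x : ℝ) : exp (k₁ * x + b₁) = exp (ξ₁ x) := by rw [hξ₁]
  have hv (x : ℝ) : exp (k₂ * x + b₂) = exp (ξ₂ x) := by rw [hξ₂]
  have hw (x : ℝ) : exp (2 * k₂ * x + (2 * b₂ - ψ₂)) = exp (2 * ξ₂ x - ψ₂) := by
    rw [hξ₂]; ring_nf
  have huw (x : ℝ) : exp ((k₁ + 2 * k₂) * x + (b₁ + 2 * b₂ - ψ₂))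
      = exp (ξ₁ x) * exp (2 * ξ₂ x - ψ₂) := by
    rw [← exp_add, hξ₁, hξ₂]; ring_nf
  have f₁_eq : f₁ = expAffine 1 0 0 + expAffine 1 (2 * k₂) (2 * b₂ - ψ₂) := by
    funext x; simp [expAffine, hf₁, hw]
  have f₂_eq : f₂ = expAffine 1 k₁ b₁ + expAffine (H ^ 2) (k₁ + 2 * k₂) (b₁ + 2 * b₂ - ψ₂) := by
    funext x; simp only [hf₂, hu, huw, Pi.add_apply, expAffine]; ring
  have f₃_eq : f₃ = expAffine 1 k₂ b₂ := by
    funext x; simp [expAffine, hf₃, hv]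
  have hH_mul : H * (k₁ + k₂) = k₁ - k₂ := by
    rw [hH]; exact div_mul_cancel₀ _ (by linarith)
  rw [exp_add, ← det_twoSoliton k₁ k₂ H _ _ _ hH_mul, f₁_eq, f₂_eq, f₃_eq]
  simp only [deriv_expAffine, deriv_expAffine_add]
  congr 1; ext i j
  fin_cases i <;> fin_cases j <;> simp [expAffine, hu, hv, hw, huw] <;> ring
end

section
/- Let k₁ > k₂ > 0, let b₁, b₂, ψ₂ ∈ ℝ, set H = (k₁ − k₂)/(k₁ + k₂), and define ξᵢ(y) = kᵢ·y + bᵢ for i = 1, 2. Then for all y ∈ ℝ, Wr₃( 1 + e^{2ξ₂ − ψ₂}, e^{ξ₁ + ξ₂}, e^{ξ₂} )(y) = k₁·k₂·(k₁ + k₂)·e^{ξ₁(y) + 2ξ₂(y)}·( H·e^{2ξ₂(y) − ψ₂} − 1 ). -/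
/-!
Each of the three functions is a constant plus an exponential of an affine function, with rates
`2k₂`, `k₁ + k₂` and `k₂`, so every derivative just multiplies the exponential by its rate.
Splitting the first column `1 + e^{2ξ₂ - ψ₂}`, the Wronskian becomes `Wr(1, e^{ξ₁+ξ₂}, e^{ξ₂})`
plus `Wr(e^{2ξ₂-ψ₂}, e^{ξ₁+ξ₂}, e^{ξ₂})`, and both are Vandermonde determinants in the rates.
-/

open Real

lemma deriv_exp_affine (c d : ℝ) :
    deriv (fun y => exp (c * y + d)) = fun y => c * exp (c * y + d) := by
  funext y
  have h : HasDerivAt (fun y => c * y + d) c y := by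
    simpa using ((hasDerivAt_id y).const_mul c).add_const d
  rw [(h.exp).deriv, mul_comm]

lemma deriv_const_add_exp_affine (a c d : ℝ) :
    deriv (fun y => a + exp (c * y + d)) = fun y => c * exp (c * y + d) := by
  funext y
  rw [deriv_const_add, deriv_exp_affine]

lemma deriv_const_mul_exp_affine (b c d : ℝ) :
    deriv (fun y => b * exp (c * y + d)) = fun y => b * (c * exp (c * y + d)) := by
  funext y
  rw [deriv_const_mul _ (by fun_prop), deriv_exp_affine]

/-- The Wronskian matrix of `1 + p e^{a y}`, `g e^{b y}`, `e e^{c y}` at `y = 0`. -/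
lemma det_wronskian_one_add_exp (p g e a b c : ℝ) :
    !![1 + p, g, e; a * p, b * g, c * e; a * (a * p), b * (b * g), c * (c * e)].det
      = g * e * (b * c * (c - b) + p * (b - a) * (c - a) * (c - b)) := by
  simp only [Matrix.det_fin_three, Matrix.of_apply, Matrix.cons_val', Matrix.cons_val_zero,
    Matrix.cons_val_one, Matrix.cons_val_two, Matrix.empty_val', Matrix.cons_val_fin_one,
    Matrix.head_cons, Matrix.tail_cons, Matrix.head_fin_const]
  ring

/-- explicit evaluation of the third-order Wronskian `J₂`
appearing in the count of negative eigenvalues of the Hessian. -/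
theorem wronskian_J2 (k₁ k₂ b₁ b₂ ψ₂ H : ℝ)
    (hk₂ : 0 < k₂) (hk : k₂ < k₁)
    (hH : H = (k₁ - k₂) / (k₁ + k₂))
    (ξ₁ ξ₂ : ℝ → ℝ)
    (hξ₁ : ∀ y, ξ₁ y = k₁ * y + b₁) (hξ₂ : ∀ y, ξ₂ y = k₂ * y + b₂)
    (f₁ f₂ f₃ : ℝ → ℝ)
    (hf₁ : ∀ y, f₁ y = 1 + Real.exp (2 * ξ₂ y - ψ₂))
    (hf₂ : ∀ y, f₂ y = Real.exp (ξ₁ y + ξ₂ y))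
    (hf₃ : ∀ y, f₃ y = Real.exp (ξ₂ y)) :
    ∀ y : ℝ,
      Matrix.det !![f₁ y, f₂ y, f₃ y;
                    deriv f₁ y, deriv f₂ y, deriv f₃ y;
                    deriv (deriv f₁) y, deriv (deriv f₂) y, deriv (deriv f₃) y]
        = k₁ * k₂ * (k₁ + k₂) * Real.exp (ξ₁ y + 2 * ξ₂ y)
            * (H * Real.exp (2 * ξ₂ y - ψ₂) - 1) := by
  intro y
  have hF₁ : f₁ = fun y => 1 + exp (2 * k₂ * y + (2 * b₂ - ψ₂)) := by
    funext z; rw [hf₁, hξ₂]; ring_nf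
  have hF₂ : f₂ = fun y => exp ((k₁ + k₂) * y + (b₁ + b₂)) := by
    funext z; rw [hf₂, hξ₁, hξ₂]; ring_nf
  have hF₃ : f₃ = fun y => exp (k₂ * y + b₂) := by
    funext z; rw [hf₃, hξ₂]
  have hexp : exp (ξ₁ y + 2 * ξ₂ y) = exp ((k₁ + k₂) * y + (b₁ + b₂)) * exp (k₂ * y + b₂) := by
    rw [← exp_add, hξ₁, hξ₂]; ring_nf
  have hs : k₁ + k₂ ≠ 0 := by linarith
  simp only [hF₁, hF₂, hF₃, deriv_const_add_exp_affine, deriv_exp_affine,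
    deriv_const_mul_exp_affine]
  rw [det_wronskian_one_add_exp, hexp, hξ₂, hH]
  field_simp
  ring_nf
end

section
/- Let k₁ > k₂ > 0, let b₁, b₂, ψ₁ ∈ ℝ, set H = (k₁ − k₂)/(k₁ + k₂), and define ξᵢ(y) = kᵢ·y + bᵢ for i = 1, 2. Then for all y ∈ ℝ, Wr₃( 1 + H⁴·e^{2ξ₁ − ψ₁}, e^{ξ₁}, e^{−ξ₂} )(y) = −(k₁ + k₂)·e^{ξ₁(y) − ξ₂(y)}·[ (k₁k₂ + 2k₁²)·H⁴·e^{2ξ₁(y) − ψ₁} − k₁k₂ ]. -/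
/-!
All three entries lie in the family `y ↦ p + q * exp (c * y + d)`, which is closed under `deriv`
(with `p` becoming `0` and `q` becoming `q * c`). Writing the entries in that form, the
Wronskian becomes a polynomial identity in `k₁, k₂, H⁴` and the three exponentials, with
`exp (ξ₁ - ξ₂) = exp ξ₁ * exp (-ξ₂)`.
-/

open Real

lemma hasDerivAt_add_mul_exp_mul_add (p q c d x : ℝ) :
    HasDerivAt (fun y => p + q * exp (c * y + d)) (q * c * exp (c * x + d)) x := by
  have h := ((((hasDerivAt_id' x).const_mul c).add_const d).exp.const_mul q).const_add p
  rwa [mul_one, mul_comm (exp _), ← mul_assoc] at h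

/-- The `0 +` keeps the derivative in the shape of the left-hand side, so the lemma applies
again to the second derivative. -/
lemma deriv_add_mul_exp_mul_add (p q c d : ℝ) :
    deriv (fun y => p + q * exp (c * y + d)) = fun y => 0 + q * c * exp (c * y + d) :=
  funext fun x => (hasDerivAt_add_mul_exp_mul_add p q c d x).deriv.trans (zero_add _).symm

theorem wronskian_J1hat_general (k₁ k₂ b₁ b₂ ψ₁ H : ℝ)
    (ξ₁ ξ₂ : ℝ → ℝ)
    (hξ₁ : ∀ y, ξ₁ y = k₁ * y + b₁) (hξ₂ : ∀ y, ξ₂ y = k₂ * y + b₂)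
    (f₁ f₂ f₃ : ℝ → ℝ)
    (hf₁ : ∀ y, f₁ y = 1 + H ^ 4 * Real.exp (2 * ξ₁ y - ψ₁))
    (hf₂ : ∀ y, f₂ y = Real.exp (ξ₁ y))
    (hf₃ : ∀ y, f₃ y = Real.exp (-ξ₂ y)) :
    ∀ y : ℝ,
      Matrix.det !![f₁ y, f₂ y, f₃ y;
                    deriv f₁ y, deriv f₂ y, deriv f₃ y;
                    deriv (deriv f₁) y, deriv (deriv f₂) y, deriv (deriv f₃) y]
        = -(k₁ + k₂) * Real.exp (ξ₁ y - ξ₂ y)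
            * ((k₁ * k₂ + 2 * k₁ ^ 2) * H ^ 4 * Real.exp (2 * ξ₁ y - ψ₁)
                - k₁ * k₂) := by
  intro y
  have ef₁ : f₁ = fun y => 1 + H ^ 4 * exp (2 * k₁ * y + (2 * b₁ - ψ₁)) :=
    funext fun y => by rw [hf₁, hξ₁]; ring_nf
  have ef₂ : f₂ = fun y => 0 + 1 * exp (k₁ * y + b₁) :=
    funext fun y => by rw [hf₂, hξ₁]; ring
  have ef₃ : f₃ = fun y => 0 + 1 * exp (-k₂ * y + -b₂) :=
    funext fun y => by rw [hf₃, hξ₂]; ring_nf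
  have exp_diff : exp (ξ₁ y - ξ₂ y) = exp (k₁ * y + b₁) * exp (-k₂ * y + -b₂) := by
    rw [← exp_add, hξ₁, hξ₂]; ring_nf
  have exp_twice : exp (2 * ξ₁ y - ψ₁) = exp (2 * k₁ * y + (2 * b₁ - ψ₁)) := by
    rw [hξ₁]; ring_nf
  rw [exp_diff, exp_twice, ef₁, ef₂, ef₃, Matrix.det_fin_three]
  simp only [deriv_add_mul_exp_mul_add, Fin.isValue, Matrix.of_apply, Matrix.cons_val',
    Matrix.cons_val_zero, Matrix.cons_val_fin_one, Matrix.cons_val_one, Matrix.cons_val]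
  ring

/-- explicit evaluation of the third-order Wronskian `Ĵ₁`
appearing in the count of negative eigenvalues of the Hessian. -/
theorem wronskian_J1hat (k₁ k₂ b₁ b₂ ψ₁ H : ℝ)
    (hk₂ : 0 < k₂) (hk : k₂ < k₁)
    (hH : H = (k₁ - k₂) / (k₁ + k₂))
    (ξ₁ ξ₂ : ℝ → ℝ)
    (hξ₁ : ∀ y, ξ₁ y = k₁ * y + b₁) (hξ₂ : ∀ y, ξ₂ y = k₂ * y + b₂)
    (f₁ f₂ f₃ : ℝ → ℝ)
    (hf₁ : ∀ y, f₁ y = 1 + H ^ 4 * Real.exp (2 * ξ₁ y - ψ₁))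
    (hf₂ : ∀ y, f₂ y = Real.exp (ξ₁ y))
    (hf₃ : ∀ y, f₃ y = Real.exp (-ξ₂ y)) :
    ∀ y : ℝ,
      Matrix.det !![f₁ y, f₂ y, f₃ y;
                    deriv f₁ y, deriv f₂ y, deriv f₃ y;
                    deriv (deriv f₁) y, deriv (deriv f₂) y, deriv (deriv f₃) y]
        = -(k₁ + k₂) * Real.exp (ξ₁ y - ξ₂ y)
            * ((k₁ * k₂ + 2 * k₁ ^ 2) * H ^ 4 * Real.exp (2 * ξ₁ y - ψ₁)
                - k₁ * k₂) :=
  wronskian_J1hat_general k₁ k₂ b₁ b₂ ψ₁ H ξ₁ ξ₂ hξ₁ hξ₂ f₁ f₂ f₃ hf₁ hf₂ hf₃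
end

section
/- Let k₁ > k₂ > 0, let b₁, b₂, ψ₁ ∈ ℝ, set H = (k₁ − k₂)/(k₁ + k₂), and define ξᵢ(y) = kᵢ·y + bᵢ for i = 1, 2. Then for all y ∈ ℝ, Wr₃( 1 + H⁴·e^{2ξ₁ − ψ₁}, e^{ξ₁}, e^{ξ₁ − ξ₂} )(y) = −k₁·k₂·e^{2ξ₁(y) − ξ₂(y)}·[ (k₁ + k₂)·H⁴·e^{2ξ₁(y) − ψ₁} + (k₁ − k₂) ]. -/
/-!
Each entry is a constant plus a multiple of an exponential `exp (a y + c)`, so differentiating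
multiplies the non-constant part by its rate `a`. By linearity in the first column the Wronskian
splits into the Wronskian of `1, e^{ξ₁}, e^{ξ₁ - ξ₂}` and that of the three exponentials
with rates `2k₁, k₁, k₁ - k₂`, which is a Vandermonde determinant in the rates.
-/

open Real

namespace ConstAddMulExp

variable {f : ℝ → ℝ} {B A a c y : ℝ}

theorem deriv_eq (hf : ∀ y, f y = B + A * exp (a * y + c)) :
    deriv f y = a * (f y - B) := by
  have hderiv : HasDerivAt f (A * (exp (a * y + c) * a)) y := by
    rw [funext hf]
    exact ((((hasDerivAt_id y).const_mul a).add_const c).exp.const_mul A).const_add B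
      |>.congr_deriv (by simp)
  rw [hderiv.deriv, hf]
  ring

theorem deriv_deriv_eq (hf : ∀ y, f y = B + A * exp (a * y + c)) :
    deriv (deriv f) y = a ^ 2 * (f y - B) := by
  have hf' : ∀ y, deriv f y = 0 + a * A * exp (a * y + c) := fun y => by
    rw [deriv_eq hf, hf]
    ring
  rw [deriv_eq hf', deriv_eq hf]
  ring

end ConstAddMulExp

theorem det_wronskian_const_add_exp (B a₁ a₂ a₃ x₁ x₂ x₃ : ℝ) :
    !![x₁, x₂, x₃;
       a₁ * (x₁ - B), a₂ * x₂, a₃ * x₃;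
       a₁ ^ 2 * (x₁ - B), a₂ ^ 2 * x₂, a₃ ^ 2 * x₃].det
      = B * (a₂ * a₃ * (a₃ - a₂)) * (x₂ * x₃)
        + (a₂ - a₁) * (a₃ - a₁) * (a₃ - a₂) * ((x₁ - B) * (x₂ * x₃)) := by
  simp only [Matrix.det_fin_three, Matrix.of_apply, Matrix.cons_val', Matrix.cons_val_zero,
    Matrix.cons_val_fin_one, Matrix.cons_val_one, Matrix.cons_val]
  ring

theorem wronskian_J2hat_general (k₁ k₂ b₁ b₂ ψ₁ H : ℝ)
    (ξ₁ ξ₂ : ℝ → ℝ)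
    (hξ₁ : ∀ y, ξ₁ y = k₁ * y + b₁) (hξ₂ : ∀ y, ξ₂ y = k₂ * y + b₂)
    (f₁ f₂ f₃ : ℝ → ℝ)
    (hf₁ : ∀ y, f₁ y = 1 + H ^ 4 * Real.exp (2 * ξ₁ y - ψ₁))
    (hf₂ : ∀ y, f₂ y = Real.exp (ξ₁ y))
    (hf₃ : ∀ y, f₃ y = Real.exp (ξ₁ y - ξ₂ y)) :
    ∀ y : ℝ,
      Matrix.det !![f₁ y, f₂ y, f₃ y;
                    deriv f₁ y, deriv f₂ y, deriv f₃ y;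
                    deriv (deriv f₁) y, deriv (deriv f₂) y, deriv (deriv f₃) y]
        = -(k₁ * k₂) * Real.exp (2 * ξ₁ y - ξ₂ y)
            * ((k₁ + k₂) * H ^ 4 * Real.exp (2 * ξ₁ y - ψ₁) + (k₁ - k₂)) := by
  have hf₁' : ∀ y, f₁ y = 1 + H ^ 4 * exp (2 * k₁ * y + (2 * b₁ - ψ₁)) := fun y => by
    rw [hf₁, hξ₁]; ring_nf
  have hf₂' : ∀ y, f₂ y = 0 + 1 * exp (k₁ * y + b₁) := fun y => by
    rw [hf₂, hξ₁]; ring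
  have hf₃' : ∀ y, f₃ y = 0 + 1 * exp ((k₁ - k₂) * y + (b₁ - b₂)) := fun y => by
    rw [hf₃, hξ₁, hξ₂]; ring_nf
  intro y
  have hprod : f₂ y * f₃ y = exp (2 * ξ₁ y - ξ₂ y) := by
    rw [hf₂, hf₃, ← exp_add]; ring_nf
  rw [ConstAddMulExp.deriv_deriv_eq hf₁', ConstAddMulExp.deriv_deriv_eq hf₂',
    ConstAddMulExp.deriv_deriv_eq hf₃', ConstAddMulExp.deriv_eq hf₁', ConstAddMulExp.deriv_eq hf₂',
    ConstAddMulExp.deriv_eq hf₃']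
  simp only [sub_zero]
  rw [det_wronskian_const_add_exp, hprod, hf₁]
  ring

/-- explicit evaluation of the third-order Wronskian `Ĵ₂`
appearing in the count of negative eigenvalues of the Hessian. -/
theorem wronskian_J2hat (k₁ k₂ b₁ b₂ ψ₁ H : ℝ)
    (hk₂ : 0 < k₂) (hk : k₂ < k₁)
    (hH : H = (k₁ - k₂) / (k₁ + k₂))
    (ξ₁ ξ₂ : ℝ → ℝ)
    (hξ₁ : ∀ y, ξ₁ y = k₁ * y + b₁) (hξ₂ : ∀ y, ξ₂ y = k₂ * y + b₂)
    (f₁ f₂ f₃ : ℝ → ℝ)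
    (hf₁ : ∀ y, f₁ y = 1 + H ^ 4 * Real.exp (2 * ξ₁ y - ψ₁))
    (hf₂ : ∀ y, f₂ y = Real.exp (ξ₁ y))
    (hf₃ : ∀ y, f₃ y = Real.exp (ξ₁ y - ξ₂ y)) :
    ∀ y : ℝ,
      Matrix.det !![f₁ y, f₂ y, f₃ y;
                    deriv f₁ y, deriv f₂ y, deriv f₃ y;
                    deriv (deriv f₁) y, deriv (deriv f₂) y, deriv (deriv f₃) y]
        = -(k₁ * k₂) * Real.exp (2 * ξ₁ y - ξ₂ y)
            * ((k₁ + k₂) * H ^ 4 * Real.exp (2 * ξ₁ y - ψ₁) + (k₁ - k₂)) :=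
  wronskian_J2hat_general k₁ k₂ b₁ b₂ ψ₁ H ξ₁ ξ₂ hξ₁ hξ₂ f₁ f₂ f₃ hf₁ hf₂ hf₃
end

section
/- Let κ > 0 and k₁, k₂ ∈ ℝ with 0 < κ·k₂ < κ·k₁ < 1. Set P₁ = (1 − κk₁)/(1 + κk₁), P₂ = (1 − κk₂)/(1 + κk₂), and H² = ((k₁ − k₂)/(k₁ + k₂))². Then 1 + P₁·H² − H²/P₂ − P₁/P₂ = 4·κ·k₂·(k₁ − k₂) / ( (1 + κk₁)·(1 − κk₂)·(k₁ + k₂) ), and in particular this quantity is strictly positive. -/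
/-!
After clearing denominators, `γ̂` is a rational function of `κk₁` and `κk₂` that factors as
`4κk₂(k₁ − k₂) / ((1 + κk₁)(1 − κk₂)(k₁ + k₂))`. Scaling numerator and denominator by `κ`
writes it as `4b(a − b) / ((1 + a)(1 − b)(a + b))` with `a = κk₁`, `b = κk₂`, and every factor
is positive when `0 < b < a < 1`.
-/

/-- The quantity `γ̂ = 1 + e^{−ψ₁+2h} − e^{ψ₂+2h} − e^{ψ₂−ψ₁}`, written with
`P = e^{−ψ}` and `H2 = e^{2h}`. -/
noncomputable def gammaHat (P₁ P₂ H2 : ℝ) : ℝ := 1 + P₁ * H2 - H2 / P₂ - P₁ / P₂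

theorem gammaHat_eq {κ k₁ k₂ : ℝ} (h₁ : 1 + κ * k₁ ≠ 0) (h₂ : 1 - κ * k₂ ≠ 0)
    (hs : k₁ + k₂ ≠ 0) :
    gammaHat ((1 - κ * k₁) / (1 + κ * k₁)) ((1 - κ * k₂) / (1 + κ * k₂))
        (((k₁ - k₂) / (k₁ + k₂)) ^ 2)
      = 4 * κ * k₂ * (k₁ - k₂) / ((1 + κ * k₁) * (1 - κ * k₂) * (k₁ + k₂)) := by
  unfold gammaHat
  field_simp
  ring

theorem gammaHat_formula_pos {κ k₁ k₂ : ℝ} (h0 : 0 < κ * k₂) (h1 : κ * k₂ < κ * k₁)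
    (h2 : κ * k₁ < 1) :
    0 < 4 * κ * k₂ * (k₁ - k₂) / ((1 + κ * k₁) * (1 - κ * k₂) * (k₁ + k₂)) := by
  have hκ : κ ≠ 0 := by rintro rfl; simp at h0
  have hscale : 4 * κ * k₂ * (k₁ - k₂) / ((1 + κ * k₁) * (1 - κ * k₂) * (k₁ + k₂))
      = 4 * (κ * k₂) * (κ * k₁ - κ * k₂)
          / ((1 + κ * k₁) * (1 - κ * k₂) * (κ * k₁ + κ * k₂)) := by
    field_simp
  rw [hscale]
  apply div_pos
  · nlinarith
  · have : 0 < κ * k₁ + κ * k₂ := by linarith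
    have : 0 < 1 + κ * k₁ := by linarith
    have : 0 < 1 - κ * k₂ := by linarith
    positivity

theorem gamma_hat_positive_general (κ k₁ k₂ P₁ P₂ H2 : ℝ)
    (h0 : 0 < κ * k₂) (h1 : κ * k₂ < κ * k₁) (h2 : κ * k₁ < 1)
    (hP₁ : P₁ = (1 - κ * k₁) / (1 + κ * k₁))
    (hP₂ : P₂ = (1 - κ * k₂) / (1 + κ * k₂))
    (hH : H2 = ((k₁ - k₂) / (k₁ + k₂)) ^ 2) :
    1 + P₁ * H2 - H2 / P₂ - P₁ / P₂
      = 4 * κ * k₂ * (k₁ - k₂) / ((1 + κ * k₁) * (1 - κ * k₂) * (k₁ + k₂))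
    ∧ 0 < 1 + P₁ * H2 - H2 / P₂ - P₁ / P₂ := by
  show gammaHat P₁ P₂ H2 = _ ∧ 0 < gammaHat P₁ P₂ H2
  subst hP₁ hP₂ hH
  have hsum : 0 < κ * (k₁ + k₂) := by linarith [mul_add κ k₁ k₂]
  have heq := gammaHat_eq (κ := κ) (by linarith) (by linarith)
    (right_ne_zero_of_mul hsum.ne')
  exact ⟨heq, heq ▸ gammaHat_formula_pos h0 h1 h2⟩

/-- the explicit formula and positivity of the quantity
`γ̂ = 1 + P₁H² − H²/P₂ − P₁/P₂` appearing in the sign analysis of the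
Wronskian. -/
theorem gamma_hat_positive (κ k₁ k₂ P₁ P₂ H2 : ℝ) (hκ : 0 < κ)
    (h0 : 0 < κ * k₂) (h1 : κ * k₂ < κ * k₁) (h2 : κ * k₁ < 1)
    (hP₁ : P₁ = (1 - κ * k₁) / (1 + κ * k₁))
    (hP₂ : P₂ = (1 - κ * k₂) / (1 + κ * k₂))
    (hH : H2 = ((k₁ - k₂) / (k₁ + k₂)) ^ 2) :
    1 + P₁ * H2 - H2 / P₂ - P₁ / P₂
      = 4 * κ * k₂ * (k₁ - k₂) / ((1 + κ * k₁) * (1 - κ * k₂) * (k₁ + k₂))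
    ∧ 0 < 1 + P₁ * H2 - H2 / P₂ - P₁ / P₂ :=
  gamma_hat_positive_general κ k₁ k₂ P₁ P₂ H2 h0 h1 h2 hP₁ hP₂ hH
end

section
/- Let κ > 0 and define, on the open set Ω = {(c₁, c₂) : 3κ² < c₂ < c₁ < 9κ²}, the functions F₁(c₁,c₂) = (8/κ)·[g(c₁) + g(c₂)] with g(c) = ln((√(c−κ²) + √(c−3κ²))/(√2·κ)) − √((c−3κ²)/(c−κ²)); F₂(c₁,c₂) = (4/κ³)·[h(c₁) + h(c₂)] with h(c) = ln((√(c−κ²) + √(c−3κ²))/(√2·κ)) − ((c+3κ²)/(3(c−κ²)))·√((c−3κ²)/(c−κ²)); λ₁(c₁,c₂) = −1/(16κ⁴) + (1/(2κ²))·(1/(c₁−κ²) + 1/(c₂−κ²)) + 2/((c₁−κ²)(c₂−κ²)); and λ₂(c₁,c₂) = −(1/(4κ²) + 1/(c₁−κ²) + 1/(c₂−κ²)). Then at every point of Ω the 2×2 Jacobian matrix J_λ of (λ₁, λ₂) with respect to (c₁, c₂) is invertible, and the matrix M = J_F · J_λ⁻¹, where J_F is the Jacobian matrix of (F₁, F₂)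 with respect to (c₁, c₂), satisfies det M = −(16/κ²)·√((c₁−κ²)(c₂−κ²)(c₁−3κ²)(c₂−3κ²)) < 0; consequently M has exactly one strictly positive and one strictly negative real eigenvalue. -/
/-!
Both Jacobians are computed in closed form. Each `Fᵢ` is a sum of one-soliton terms and each `λᵢ`
is symmetric in `(c₁, c₂)`, so the second column of either Jacobian is its first column with `c₁`
and `c₂` exchanged. With `aⱼ = cⱼ - κ²` and `bⱼ = cⱼ - 3κ²`, the `λᵢ` are affine in `1 / aⱼ`, while
`g' = √b / (2 a √a)` and `h' = (c + 3κ²) / a · g'`. Hence `det J_λ = 2 (c₂ - c₁) / (a₁ a₂)³ ≠ 0` and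
`det J_F = 128 (c₁ - c₂) g'(c₁) g'(c₂) / (κ² a₁ a₂)`; as `a² g' = √a √b / 2`, the quotient is
`-(16 / κ²) √(a₁ a₂ b₁ b₂) < 0`. The characteristic polynomial `X² - tr M X + det M` of a real
`2 × 2` matrix with negative determinant has two real roots of opposite signs.
-/

open Matrix Real Module

theorem Matrix.hasEigenvalue_toLin'_iff_of_fin_two {R : Type*} [CommRing R] [IsDomain R]
    (A : Matrix (Fin 2) (Fin 2) R) (e : R) :
    End.HasEigenvalue (toLin' A) e ↔ e * e - A.trace * e + A.det = 0 := by
  rw [End.hasEigenvalue_iff_isRoot_charpoly, charpoly_toLin', charpoly_fin_two]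
  simp [sq]

theorem Matrix.exists_eigenvalues_neg_pos_of_det_neg (A : Matrix (Fin 2) (Fin 2) ℝ)
    (hA : A.det < 0) :
    ∃ e₁ e₂ : ℝ, e₁ < 0 ∧ 0 < e₂ ∧
      ∀ e, End.HasEigenvalue (toLin' A) e ↔ e = e₁ ∨ e = e₂ := by
  set s := √(A.trace ^ 2 - 4 * A.det)
  have hdiscrim : discrim 1 (-A.trace) A.det = s * s := by
    rw [mul_self_sqrt (by nlinarith [sq_nonneg A.trace]), discrim]
    ring
  have htrace : |A.trace| < s := by
    rw [← sqrt_sq_eq_abs]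
    exact sqrt_lt_sqrt (sq_nonneg _) (by linarith)
  refine ⟨(A.trace - s) / 2, (A.trace + s) / 2, by linarith [le_abs_self A.trace],
    by linarith [neg_abs_le A.trace], fun e => ?_⟩
  rw [hasEigenvalue_toLin'_iff_of_fin_two, or_comm]
  convert quadratic_eq_zero_iff one_ne_zero hdiscrim e using 2 <;> ring_nf

theorem hasDerivAt_add_mul_inv_sub (α β : ℝ) {p x : ℝ} (hx : x ≠ p) :
    HasDerivAt (fun y => α + β * (y - p)⁻¹) (-β / (x - p) ^ 2) x := by
  refine ((((hasDerivAt_id' x).sub_const p).inv (sub_ne_zero.2 hx)).const_mul β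
    |>.const_add α).congr_deriv ?_
  ring

theorem hasDerivAt_log_sqrt_add_sqrt {p q k x : ℝ} (hp : p < x) (hq : q < x) (hk : k ≠ 0) :
    HasDerivAt (fun y => log ((√(y - p) + √(y - q)) / k)) (1 / (2 * √(x - p) * √(x - q))) x := by
  have hsp := sqrt_pos.2 (sub_pos.2 hp)
  have hsq := sqrt_pos.2 (sub_pos.2 hq)
  have hp' := ((hasDerivAt_id' x).sub_const p).sqrt (sub_pos.2 hp).ne'
  have hq' := ((hasDerivAt_id' x).sub_const q).sqrt (sub_pos.2 hq).ne'
  refine (((hp'.add hq').div_const k).log (div_ne_zero (add_pos hsp hsq).ne' hk)).congr_deriv ?_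
  simp only [Pi.add_apply]
  field_simp
  ring

theorem hasDerivAt_sqrt_sub_div_sub {p q x : ℝ} (hp : p < x) (hq : q < x) :
    HasDerivAt (fun y => √((y - q) / (y - p)))
      ((q - p) / (2 * (x - p) * √(x - p) * √(x - q))) x := by
  have hap := sub_pos.2 hp
  have haq := sub_pos.2 hq
  have hquot := ((hasDerivAt_id' x).sub_const q).div ((hasDerivAt_id' x).sub_const p) hap.ne'
  refine (hquot.sqrt (div_pos haq hap).ne').congr_deriv ?_
  simp only [Pi.div_apply]
  rw [sqrt_div haq.le]
  field_simp
  rw [sq_sqrt hap.le]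
  ring

noncomputable def mchG (κ c : ℝ) : ℝ :=
  log ((√(c - κ ^ 2) + √(c - 3 * κ ^ 2)) / (√2 * κ)) - √((c - 3 * κ ^ 2) / (c - κ ^ 2))

noncomputable def mchH (κ c : ℝ) : ℝ :=
  log ((√(c - κ ^ 2) + √(c - 3 * κ ^ 2)) / (√2 * κ))
    - ((c + 3 * κ ^ 2) / (3 * (c - κ ^ 2))) * √((c - 3 * κ ^ 2) / (c - κ ^ 2))

noncomputable def mchGDeriv (κ c : ℝ) : ℝ := √(c - 3 * κ ^ 2) / (2 * (c - κ ^ 2) * √(c - κ ^ 2))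

section Profiles

variable {κ c : ℝ}

theorem hasDerivAt_mchG (hκ : κ ≠ 0) (hc : 3 * κ ^ 2 < c) :
    HasDerivAt (mchG κ) (mchGDeriv κ c) c := by
  have hκc : κ ^ 2 < c := by linarith [sq_nonneg κ]
  have ha : 0 < c - κ ^ 2 := sub_pos.2 hκc
  have hb : 0 < c - 3 * κ ^ 2 := sub_pos.2 hc
  refine ((hasDerivAt_log_sqrt_add_sqrt hκc hc (by positivity)).sub
    (hasDerivAt_sqrt_sub_div_sub hκc hc)).congr_deriv ?_
  have := sqrt_pos.2 ha
  have ht := sq_sqrt hb.le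
  have := sqrt_pos.2 hb
  unfold mchGDeriv
  set t := √(c - 3 * κ ^ 2)
  field_simp
  rw [ht]
  ring

theorem hasDerivAt_mchH (hκ : κ ≠ 0) (hc : 3 * κ ^ 2 < c) :
    HasDerivAt (mchH κ) ((c + 3 * κ ^ 2) / (c - κ ^ 2) * mchGDeriv κ c) c := by
  have hκc : κ ^ 2 < c := by linarith [sq_nonneg κ]
  have ha : 0 < c - κ ^ 2 := sub_pos.2 hκc
  have hb : 0 < c - 3 * κ ^ 2 := sub_pos.2 hc
  have hcoeff := ((hasDerivAt_id' c).add_const (3 * κ ^ 2)).div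
    (((hasDerivAt_id' c).sub_const (κ ^ 2)).const_mul 3) (mul_ne_zero three_ne_zero ha.ne')
  refine ((hasDerivAt_log_sqrt_add_sqrt hκc hc (by positivity)).sub
    (hcoeff.mul (hasDerivAt_sqrt_sub_div_sub hκc hc))).congr_deriv ?_
  have := sqrt_pos.2 ha
  have ht := sq_sqrt hb.le
  have := sqrt_pos.2 hb
  simp only [Pi.div_apply]
  unfold mchGDeriv
  rw [sqrt_div hb.le]
  set t := √(c - 3 * κ ^ 2)
  field_simp
  rw [ht]
  ring

end Profiles

noncomputable def mchLambda₁ (κ c₁ c₂ : ℝ) : ℝ :=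
  -(1 / (16 * κ ^ 4)) + (1 / (2 * κ ^ 2)) * (1 / (c₁ - κ ^ 2) + 1 / (c₂ - κ ^ 2))
    + 2 / ((c₁ - κ ^ 2) * (c₂ - κ ^ 2))

noncomputable def mchLambda₂ (κ c₁ c₂ : ℝ) : ℝ :=
  -(1 / (4 * κ ^ 2) + 1 / (c₁ - κ ^ 2) + 1 / (c₂ - κ ^ 2))

def twoSoliton (k : ℝ) (φ : ℝ → ℝ) (c₁ c₂ : ℝ) : ℝ := k * (φ c₁ + φ c₂)

noncomputable def jacobian (f₁ f₂ : ℝ → ℝ → ℝ) (c₁ c₂ : ℝ) : Matrix (Fin 2) (Fin 2) ℝ :=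
  !![deriv (fun c => f₁ c c₂) c₁, deriv (fun c => f₁ c₁ c) c₂;
     deriv (fun c => f₂ c c₂) c₁, deriv (fun c => f₂ c₁ c) c₂]

theorem jacobian_of_symmetric {f₁ f₂ : ℝ → ℝ → ℝ} (hf₁ : ∀ x y, f₁ x y = f₁ y x)
    (hf₂ : ∀ x y, f₂ x y = f₂ y x) (c₁ c₂ : ℝ) :
    jacobian f₁ f₂ c₁ c₂ =
      !![deriv (fun c => f₁ c c₂) c₁, deriv (fun c => f₁ c c₁) c₂;
         deriv (fun c => f₂ c c₂) c₁, deriv (fun c => f₂ c c₁) c₂] := by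
  simp only [jacobian, hf₁ c₁, hf₂ c₁]

section Multipliers

variable {κ c : ℝ}

theorem mchLambda₁_comm (κ x y : ℝ) : mchLambda₁ κ x y = mchLambda₁ κ y x := by
  unfold mchLambda₁; ring

theorem mchLambda₂_comm (κ x y : ℝ) : mchLambda₂ κ x y = mchLambda₂ κ y x := by
  unfold mchLambda₂; ring

theorem hasDerivAt_mchLambda₁ (hc : c ≠ κ ^ 2) (y : ℝ) :
    HasDerivAt (fun x => mchLambda₁ κ x y)
      (-(1 / (2 * κ ^ 2) + 2 / (y - κ ^ 2)) / (c - κ ^ 2) ^ 2) c := by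
  -- valid also at `x = κ²`, both sides then using `1 / 0 = 0`
  have hform : (fun x => mchLambda₁ κ x y) = fun x => (-(1 / (16 * κ ^ 4))
      + 1 / (2 * κ ^ 2) / (y - κ ^ 2)) + (1 / (2 * κ ^ 2) + 2 / (y - κ ^ 2)) * (x - κ ^ 2)⁻¹ := by
    funext x; simp only [mchLambda₁, div_eq_mul_inv, mul_inv]; ring
  rw [hform]
  exact hasDerivAt_add_mul_inv_sub _ _ hc

theorem hasDerivAt_mchLambda₂ (hc : c ≠ κ ^ 2) (y : ℝ) :
    HasDerivAt (fun x => mchLambda₂ κ x y) (1 / (c - κ ^ 2) ^ 2) c := by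
  have hform : (fun x => mchLambda₂ κ x y) = fun x => -(1 / (4 * κ ^ 2) + 1 / (y - κ ^ 2))
      + (-1) * (x - κ ^ 2)⁻¹ := by
    funext x; unfold mchLambda₂; ring
  rw [hform]
  exact (hasDerivAt_add_mul_inv_sub _ _ hc).congr_deriv (by ring)

theorem jacobian_mchLambda {c₁ c₂ : ℝ} (h₁ : c₁ ≠ κ ^ 2) (h₂ : c₂ ≠ κ ^ 2) :
    jacobian (mchLambda₁ κ) (mchLambda₂ κ) c₁ c₂ =
      !![-(1 / (2 * κ ^ 2) + 2 / (c₂ - κ ^ 2)) / (c₁ - κ ^ 2) ^ 2,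
           -(1 / (2 * κ ^ 2) + 2 / (c₁ - κ ^ 2)) / (c₂ - κ ^ 2) ^ 2;
         1 / (c₁ - κ ^ 2) ^ 2, 1 / (c₂ - κ ^ 2) ^ 2] := by
  rw [jacobian_of_symmetric (mchLambda₁_comm κ) (mchLambda₂_comm κ),
    (hasDerivAt_mchLambda₁ h₁ c₂).deriv, (hasDerivAt_mchLambda₁ h₂ c₁).deriv,
    (hasDerivAt_mchLambda₂ h₁ c₂).deriv, (hasDerivAt_mchLambda₂ h₂ c₁).deriv]

theorem det_jacobian_mchLambda {c₁ c₂ : ℝ} (h₁ : c₁ ≠ κ ^ 2) (h₂ : c₂ ≠ κ ^ 2) :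
    (jacobian (mchLambda₁ κ) (mchLambda₂ κ) c₁ c₂).det
      = 2 * (c₂ - c₁) / ((c₁ - κ ^ 2) ^ 3 * (c₂ - κ ^ 2) ^ 3) := by
  have := sub_ne_zero.2 h₁
  have := sub_ne_zero.2 h₂
  rw [jacobian_mchLambda h₁ h₂, det_fin_two_of]
  field_simp
  ring

end Multipliers

section TwoSoliton

variable {κ c₁ c₂ : ℝ}

theorem twoSoliton_comm (k : ℝ) (φ : ℝ → ℝ) (x y : ℝ) :
    twoSoliton k φ x y = twoSoliton k φ y x := by
  simp only [twoSoliton, add_comm]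

theorem HasDerivAt.twoSoliton {k d x : ℝ} {φ : ℝ → ℝ} (hφ : HasDerivAt φ d x) (y : ℝ) :
    HasDerivAt (fun c => twoSoliton k φ c y) (k * d) x :=
  (hφ.add_const (φ y)).const_mul k

theorem jacobian_twoSoliton_mch (hκ : κ ≠ 0) (h₁ : 3 * κ ^ 2 < c₁) (h₂ : 3 * κ ^ 2 < c₂) :
    jacobian (twoSoliton (8 / κ) (mchG κ)) (twoSoliton (4 / κ ^ 3) (mchH κ)) c₁ c₂ =
      !![8 / κ * mchGDeriv κ c₁, 8 / κ * mchGDeriv κ c₂;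
         4 / κ ^ 3 * ((c₁ + 3 * κ ^ 2) / (c₁ - κ ^ 2) * mchGDeriv κ c₁),
         4 / κ ^ 3 * ((c₂ + 3 * κ ^ 2) / (c₂ - κ ^ 2) * mchGDeriv κ c₂)] := by
  rw [jacobian_of_symmetric (twoSoliton_comm _ _) (twoSoliton_comm _ _),
    ((hasDerivAt_mchG hκ h₁).twoSoliton c₂).deriv, ((hasDerivAt_mchG hκ h₂).twoSoliton c₁).deriv,
    ((hasDerivAt_mchH hκ h₁).twoSoliton c₂).deriv, ((hasDerivAt_mchH hκ h₂).twoSoliton c₁).deriv]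

theorem det_jacobian_twoSoliton_mch (hκ : κ ≠ 0) (h₁ : 3 * κ ^ 2 < c₁) (h₂ : 3 * κ ^ 2 < c₂) :
    (jacobian (twoSoliton (8 / κ) (mchG κ)) (twoSoliton (4 / κ ^ 3) (mchH κ)) c₁ c₂).det
      = 128 * (c₁ - c₂) * mchGDeriv κ c₁ * mchGDeriv κ c₂
        / (κ ^ 2 * (c₁ - κ ^ 2) * (c₂ - κ ^ 2)) := by
  have : c₁ - κ ^ 2 ≠ 0 := by linarith [sq_nonneg κ]
  have : c₂ - κ ^ 2 ≠ 0 := by linarith [sq_nonneg κ]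
  rw [jacobian_twoSoliton_mch hκ h₁ h₂, det_fin_two_of]
  field_simp
  ring

end TwoSoliton

theorem sq_mul_mchGDeriv {κ c : ℝ} (hc : κ ^ 2 < c) :
    (c - κ ^ 2) ^ 2 * mchGDeriv κ c = √(c - κ ^ 2) * √(c - 3 * κ ^ 2) / 2 := by
  have ha := sub_pos.2 hc
  have := sqrt_pos.2 ha
  unfold mchGDeriv
  field_simp
  rw [sq_sqrt ha.le]
  ring

section Hessian

variable {κ c₁ c₂ : ℝ}

theorem isUnit_det_jacobian_mchLambda (h₂ : κ ^ 2 < c₂) (h₂₁ : c₂ < c₁) :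
    IsUnit (jacobian (mchLambda₁ κ) (mchLambda₂ κ) c₁ c₂).det := by
  have := sub_pos.2 h₂
  have := sub_pos.2 (h₂.trans h₂₁)
  rw [isUnit_iff_ne_zero, det_jacobian_mchLambda (h₂.trans h₂₁).ne' h₂.ne']
  exact div_ne_zero (mul_ne_zero two_ne_zero (sub_ne_zero.2 h₂₁.ne)) (by positivity)

theorem det_hessian_mch (hκ : κ ≠ 0) (h₂ : 3 * κ ^ 2 < c₂) (h₂₁ : c₂ < c₁) :
    (jacobian (twoSoliton (8 / κ) (mchG κ)) (twoSoliton (4 / κ ^ 3) (mchH κ)) c₁ c₂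
        * (jacobian (mchLambda₁ κ) (mchLambda₂ κ) c₁ c₂)⁻¹).det
      = -(16 / κ ^ 2) * √((c₁ - κ ^ 2) * (c₂ - κ ^ 2) * (c₁ - 3 * κ ^ 2) * (c₂ - 3 * κ ^ 2)) := by
  have h₁ : 3 * κ ^ 2 < c₁ := h₂.trans h₂₁
  have ha₁ : κ ^ 2 < c₁ := by linarith [sq_nonneg κ]
  have ha₂ : κ ^ 2 < c₂ := by linarith [sq_nonneg κ]
  rw [det_mul, det_nonsing_inv, Ring.inverse_eq_inv', det_jacobian_twoSoliton_mch hκ h₁ h₂,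
    det_jacobian_mchLambda ha₁.ne' ha₂.ne']
  have : c₂ - c₁ ≠ 0 := sub_ne_zero.2 h₂₁.ne
  have := sub_pos.2 ha₁
  have := sub_pos.2 ha₂
  have := sub_pos.2 h₁
  have := sub_pos.2 h₂
  calc _ = -(64 / κ ^ 2) * ((c₁ - κ ^ 2) ^ 2 * mchGDeriv κ c₁)
        * ((c₂ - κ ^ 2) ^ 2 * mchGDeriv κ c₂) := by
        field_simp
        ring
    _ = _ := by
        rw [sq_mul_mchGDeriv ha₁, sq_mul_mchGDeriv ha₂, sqrt_mul, sqrt_mul, sqrt_mul]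
        · ring
        all_goals positivity

theorem det_hessian_mch_neg (hκ : κ ≠ 0) (h₂ : 3 * κ ^ 2 < c₂) (h₂₁ : c₂ < c₁) :
    (jacobian (twoSoliton (8 / κ) (mchG κ)) (twoSoliton (4 / κ ^ 3) (mchH κ)) c₁ c₂
        * (jacobian (mchLambda₁ κ) (mchLambda₂ κ) c₁ c₂)⁻¹).det < 0 := by
  have h₁ : 3 * κ ^ 2 < c₁ := h₂.trans h₂₁
  have := sub_pos.2 h₁
  have := sub_pos.2 h₂
  have : 0 < c₁ - κ ^ 2 := by linarith [sq_nonneg κ]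
  have : 0 < c₂ - κ ^ 2 := by linarith [sq_nonneg κ]
  rw [det_hessian_mch hκ h₂ h₂₁]
  exact mul_neg_of_neg_of_pos (neg_neg_of_pos (by positivity)) (sqrt_pos.2 (by positivity))

end Hessian

/-- the Maddocks–Sachs Hessian matrix `M = J_F · J_λ⁻¹` of the
2-soliton of the mCH equation has determinant
`−(16/κ²)·√((c₁−κ²)(c₂−κ²)(c₁−3κ²)(c₂−3κ²)) < 0`, hence exactly one strictly
positive and one strictly negative real eigenvalue; moreover `J_λ` is
invertible on `Ω = {3κ² < c₂ < c₁ < 9κ²}`. -/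
theorem hessian_matrix_M (κ : ℝ) (hκ : 0 < κ)
    (F₁ F₂ l₁ l₂ : ℝ → ℝ → ℝ) (g h : ℝ → ℝ)
    (hg : ∀ c, g c = Real.log ((Real.sqrt (c - κ ^ 2) + Real.sqrt (c - 3 * κ ^ 2))
        / (Real.sqrt 2 * κ)) - Real.sqrt ((c - 3 * κ ^ 2) / (c - κ ^ 2)))
    (hh : ∀ c, h c = Real.log ((Real.sqrt (c - κ ^ 2) + Real.sqrt (c - 3 * κ ^ 2))
        / (Real.sqrt 2 * κ))
      - ((c + 3 * κ ^ 2) / (3 * (c - κ ^ 2))) * Real.sqrt ((c - 3 * κ ^ 2) / (c - κ ^ 2)))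
    (hF₁ : ∀ c₁ c₂, F₁ c₁ c₂ = (8 / κ) * (g c₁ + g c₂))
    (hF₂ : ∀ c₁ c₂, F₂ c₁ c₂ = (4 / κ ^ 3) * (h c₁ + h c₂))
    (hl₁ : ∀ c₁ c₂, l₁ c₁ c₂ = -(1 / (16 * κ ^ 4))
      + (1 / (2 * κ ^ 2)) * (1 / (c₁ - κ ^ 2) + 1 / (c₂ - κ ^ 2))
      + 2 / ((c₁ - κ ^ 2) * (c₂ - κ ^ 2)))
    (hl₂ : ∀ c₁ c₂, l₂ c₁ c₂ = -(1 / (4 * κ ^ 2) + 1 / (c₁ - κ ^ 2) + 1 / (c₂ - κ ^ 2))) :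
    ∀ c₁ c₂ : ℝ, 3 * κ ^ 2 < c₂ → c₂ < c₁ → c₁ < 9 * κ ^ 2 →
      let Jlam : Matrix (Fin 2) (Fin 2) ℝ :=
        !![deriv (fun c => l₁ c c₂) c₁, deriv (fun c => l₁ c₁ c) c₂;
           deriv (fun c => l₂ c c₂) c₁, deriv (fun c => l₂ c₁ c) c₂]
      let JF : Matrix (Fin 2) (Fin 2) ℝ :=
        !![deriv (fun c => F₁ c c₂) c₁, deriv (fun c => F₁ c₁ c) c₂;
           deriv (fun c => F₂ c c₂) c₁, deriv (fun c => F₂ c₁ c) c₂]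
      let M : Matrix (Fin 2) (Fin 2) ℝ := JF * Jlam⁻¹
      IsUnit Jlam.det
      ∧ M.det = -(16 / κ ^ 2)
          * Real.sqrt ((c₁ - κ ^ 2) * (c₂ - κ ^ 2) * (c₁ - 3 * κ ^ 2) * (c₂ - 3 * κ ^ 2))
      ∧ M.det < 0
      ∧ ∃ e₁ e₂ : ℝ, e₁ < 0 ∧ 0 < e₂ ∧
          ∀ e : ℝ, Module.End.HasEigenvalue (Matrix.toLin' M) e ↔ (e = e₁ ∨ e = e₂) := by
  obtain rfl : g = mchG κ := funext hg
  obtain rfl : h = mchH κ := funext hh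
  obtain rfl : F₁ = twoSoliton (8 / κ) (mchG κ) := funext₂ hF₁
  obtain rfl : F₂ = twoSoliton (4 / κ ^ 3) (mchH κ) := funext₂ hF₂
  obtain rfl : l₁ = mchLambda₁ κ := funext₂ hl₁
  obtain rfl : l₂ = mchLambda₂ κ := funext₂ hl₂
  intro c₁ c₂ h₂ h₂₁ _ Jlam JF M
  have hM_neg : M.det < 0 := det_hessian_mch_neg hκ.ne' h₂ h₂₁
  exact ⟨isUnit_det_jacobian_mchLambda (by linarith [sq_nonneg κ]) h₂₁,
    det_hessian_mch hκ.ne' h₂ h₂₁, hM_neg, exists_eigenvalues_neg_pos_of_det_neg M hM_neg⟩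
end
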